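/- arXiv:2201.00198 — 5 statements merged into one kernel-verified Lean document; each statement's English description precedes it below -/
import Mathlib

section
/- For any n×n real symmetric matrix M, there exists a basis of ℝ^n consisting of eigenvectors of M each having minimal support; that is, each basis vector f is an eigenvector of M such that every eigenvector g of M for the same eigenvalue with supp(g) ⊆ supp(f) satisfies supp(g) = supp(f). -/
open Matrix Polynomial

section NodalDefs

variable {V : Type*}

/-- The product of the signature over consecutive pairs of a list of vertices. -/
noncomputable def chainSign (σ : V → V → ℝ) (l : List V) : ℝ :=
  ((l.zip l.tail).map fun p => σ p.1 p.2).prod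

/-- One step of a strong nodal domain walk. -/
def SWalkStep (G : SimpleGraph V) (σ : V → V → ℝ) (f : V → ℝ) (u v : V) : Prop :=
  G.Adj u v ∧ 0 < f u * σ u v * f v

/-- `x` and `y` are connected by a strong nodal domain walk (S-walk). -/
def SConn (G : SimpleGraph V) (σ : V → V → ℝ) (f : V → ℝ) (x y : V) : Prop :=
  ∃ l : List V, 2 ≤ l.length ∧ l.Chain' (SWalkStep G σ f) ∧
    l.head? = some x ∧ l.getLast? = some y

/-- The strong nodal domain (as a vertex set) containing the non-zero `w`. -/
def strongClass (G : SimpleGraph V) (σ : V → V → ℝ) (f : V → ℝ) (w : V) : Set V :=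
  {x | f x ≠ 0 ∧ (x = w ∨ SConn G σ f x w)}

/-- The set of strong nodal domains (as vertex sets) of `f`. -/
def strongDomains (G : SimpleGraph V) (σ : V → V → ℝ) (f : V → ℝ) : Set (Set V) :=
  {D | ∃ w, f w ≠ 0 ∧ D = strongClass G σ f w}

/-- 𝔖(f): the number of strong nodal domains of `f`. -/
noncomputable def numStrong (G : SimpleGraph V) (σ : V → V → ℝ) (f : V → ℝ) : ℕ :=
  Nat.card (strongDomains G σ f)

/-- A list of vertices is a weak nodal domain walk (W-walk). -/
def IsWWalk (G : SimpleGraph V) (σ : V → V → ℝ) (f : V → ℝ) (l : List V) : Prop :=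
  2 ≤ l.length ∧ l.Chain' G.Adj ∧
    ∀ i j : Fin l.length, i < j → f (l.get i) ≠ 0 → f (l.get j) ≠ 0 →
      (∀ k : Fin l.length, i < k → k < j → f (l.get k) = 0) →
      0 < f (l.get i) * chainSign σ ((l.drop i.val).take (j.val - i.val + 1)) * f (l.get j)

/-- `x` and `y` are connected by a weak nodal domain walk (W-walk). -/
def WConn (G : SimpleGraph V) (σ : V → V → ℝ) (f : V → ℝ) (x y : V) : Prop :=
  ∃ l : List V, IsWWalk G σ f l ∧ l.head? = some x ∧ l.getLast? = some y

/-- The weak nodal domain (as a vertex set) associated with the class of the non-zero `w`: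
the class `W` of `w` together with all vertices having a W-walk to some vertex of `W`. -/
def weakClass (G : SimpleGraph V) (σ : V → V → ℝ) (f : V → ℝ) (w : V) : Set V :=
  {x | (f x ≠ 0 ∧ (x = w ∨ WConn G σ f x w)) ∨
       ∃ u, f u ≠ 0 ∧ (u = w ∨ WConn G σ f u w) ∧ WConn G σ f x u}

/-- The set of weak nodal domains (as vertex sets) of `f`. -/
def weakDomains (G : SimpleGraph V) (σ : V → V → ℝ) (f : V → ℝ) : Set (Set V) :=
  {D | ∃ w, f w ≠ 0 ∧ D = weakClass G σ f w}

/-- 𝔚(f): the number of weak nodal domains of `f`. -/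
noncomputable def numWeak (G : SimpleGraph V) (σ : V → V → ℝ) (f : V → ℝ) : ℕ :=
  Nat.card (weakDomains G σ f)

/-- `σ` is a valid signature on `G`: symmetric and ±1-valued on edges. -/
def IsSignature (G : SimpleGraph V) (σ : V → V → ℝ) : Prop :=
  (∀ x y, σ x y = σ y x) ∧ ∀ x y, G.Adj x y → σ x y = 1 ∨ σ x y = -1

/-- `M` is compatible with the signed graph `(G, σ)`: `(G, σ)` is the induced
signed graph of `M`. -/
def Compatible (M : Matrix V V ℝ) (G : SimpleGraph V) (σ : V → V → ℝ) : Prop :=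
  (∀ x y, G.Adj x y ↔ x ≠ y ∧ M x y ≠ 0) ∧
  (∀ x y, G.Adj x y → σ x y = -(M x y / |M x y|))

/-- A signed graph is balanced if every cycle has positive sign. -/
def IsBalanced (G : SimpleGraph V) (σ : V → V → ℝ) : Prop :=
  ∀ (x : V) (p : G.Walk x x), p.IsCycle → chainSign σ p.support = 1

/-- A signed graph is antibalanced if its negation is balanced. -/
def IsAntibalanced (G : SimpleGraph V) (σ : V → V → ℝ) : Prop :=
  IsBalanced G (fun x y => -(σ x y))

/-- ℓ(G) = |E| - |V| + c(G), the cyclomatic number of `G`. -/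
noncomputable def cyclomatic (G : SimpleGraph V) : ℕ :=
  Nat.card G.edgeSet + Nat.card G.ConnectedComponent - Nat.card V

/-- The subgraph of `G` on the edges `{x,y}` with `f x * σ x y * f y > 0`. -/
def posSubgraph (G : SimpleGraph V) (σ : V → V → ℝ) (f : V → ℝ) : SimpleGraph V where
  Adj x y := G.Adj x y ∧ 0 < f x * σ x y * f y ∧ 0 < f y * σ y x * f x
  symm := ⟨fun _ _ h => ⟨h.1.symm, h.2.2, h.2.1⟩⟩
  loopless := ⟨fun x h => G.loopless.irrefl x h.1⟩

/-- `x` is tree-like: removing `x` and its incident edges increases the number of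
connected components by `d_x - 1`. -/
def IsTreeLike (G : SimpleGraph V) (x : V) : Prop :=
  Nat.card (SimpleGraph.induce {y | y ≠ x} G).ConnectedComponent + 1
    = Nat.card G.ConnectedComponent + Nat.card (G.neighborSet x)

/-- The Fiedler zero set of `f` on `G`. -/
def fiedlerZeroSet (G : SimpleGraph V) (f : V → ℝ) : Set V :=
  {x | f x = 0 ∧ ((∀ y, G.Adj x y → f y = 0) ∨ ¬ IsTreeLike G x)}

end NodalDefs

/-! Any subspace `W` of `K^ι` is spanned by its nonzero vectors of minimal support: if `f ∈ W` is
not of that kind, some nonzero `g ∈ W` has smaller support, and `f - (f j / g j) • g` with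
`g j ≠ 0` loses the coordinate `j`, so induction on the support applies to both summands of
`f = (f - (f j / g j) • g) + (f j / g j) • g`. For a symmetric matrix the eigenspaces span `ℝⁿ`,
so the minimal-support eigenvectors do too, and a basis can be picked among them. -/

open Function Module Submodule

section ElementaryVectors

variable {K ι : Type*} [DivisionRing K]

theorem Function.support_sub_div_smul_ssubset {f g : ι → K} (hgf : support g ⊆ support f)
    {j : ι} (hj : g j ≠ 0) : support (f - (f j / g j) • g) ⊂ support f := by
  refine (Set.ssubset_iff_of_subset ?_).mpr ⟨j, hgf hj, ?_⟩
  · exact (support_sub _ _).trans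
      (Set.union_subset le_rfl ((support_const_smul_subset _ _).trans hgf))
  · simp [hj]

/-- The elementary vectors of `W` in Rockafellar's sense: its nonzero vectors of
inclusion-minimal support. -/
def Submodule.elementaryVectors (W : Submodule K (ι → K)) : Set (ι → K) :=
  {f | f ∈ W ∧ f ≠ 0 ∧ ∀ g ∈ W, g ≠ 0 → support g ⊆ support f → support g = support f}

theorem Submodule.mem_span_elementaryVectors [Finite ι] {W : Submodule K (ι → K)}
    {f : ι → K} (hf : f ∈ W) : f ∈ span K W.elementaryVectors := by
  induction hs : support f using WellFoundedLT.induction generalizing f with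
  | _ s ih =>
    subst hs
    by_cases hf0 : f = 0
    · exact hf0 ▸ zero_mem _
    by_cases hmin : ∀ g ∈ W, g ≠ 0 → support g ⊆ support f → support g = support f
    · exact subset_span ⟨hf, hf0, hmin⟩
    push Not at hmin
    obtain ⟨g, hgW, hg0, hgf, hne⟩ := hmin
    obtain ⟨j, hj⟩ := support_nonempty_iff.mpr hg0
    have hg : g ∈ span K W.elementaryVectors := ih _ (hgf.ssubset_of_ne hne) hgW rfl
    have hr : f - (f j / g j) • g ∈ span K W.elementaryVectors :=
      ih _ (support_sub_div_smul_ssubset hgf hj) (sub_mem hf (smul_mem _ _ hgW)) rfl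
    simpa using add_mem hr (smul_mem _ (f j / g j) hg)

theorem Submodule.span_elementaryVectors [Finite ι] (W : Submodule K (ι → K)) :
    span K W.elementaryVectors = W :=
  le_antisymm (span_le.mpr fun _ hf => hf.1) fun _ hf => mem_span_elementaryVectors hf

end ElementaryVectors

theorem Module.Basis.exists_basis_forall_mem_of_span_eq_top {K V ι : Type*} [DivisionRing K]
    [AddCommGroup V] [Module K V] (b : Basis ι K V) {s : Set V} (hs : span K s = ⊤) :
    ∃ b' : Basis ι K V, ∀ i, b' i ∈ s := by
  let c := Basis.ofSpan hs.ge
  exact ⟨c.reindex (c.indexEquiv b), fun i =>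
    Basis.ofSpan_subset hs.ge ⟨(c.indexEquiv b).symm i, by simp [c]⟩⟩

theorem Matrix.IsHermitian.iSup_eigenspace_toLin'_eq_top {𝕜 n : Type*} [RCLike 𝕜] [Fintype n]
    [DecidableEq n] {A : Matrix n n 𝕜} (hA : A.IsHermitian) :
    ⨆ μ : 𝕜, End.eigenspace (toLin' A) μ = ⊤ := by
  let B := hA.eigenvectorBasis.toBasis.map (WithLp.linearEquiv 2 𝕜 (n → 𝕜))
  rw [eq_top_iff, ← B.span_eq, span_le]
  rintro _ ⟨j, rfl⟩
  refine le_iSup (fun μ : 𝕜 => End.eigenspace (toLin' A) μ) (hA.eigenvalues j : 𝕜) ?_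
  rw [End.mem_eigenspace_iff, toLin'_apply]
  simpa [B, RCLike.real_smul_eq_coe_smul] using hA.mulVec_eigenvectorBasis j

/-- every real symmetric matrix has a basis of eigenvectors with
minimal support. -/
theorem stmt_0 (n : ℕ) (M : Matrix (Fin n) (Fin n) ℝ) (hM : M.IsSymm) :
    ∃ b : Module.Basis (Fin n) ℝ (Fin n → ℝ),
      ∀ i : Fin n, ∃ μ : ℝ, M.mulVec (b i) = μ • (b i) ∧
        ∀ g : Fin n → ℝ, g ≠ 0 → M.mulVec g = μ • g →
          {j | g j ≠ 0} ⊆ {j | b i j ≠ 0} → {j | g j ≠ 0} = {j | b i j ≠ 0} := by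
  have hspan : span ℝ (⋃ μ : ℝ, (End.eigenspace (toLin' M) μ).elementaryVectors) = ⊤ := by
    simp only [span_iUnion, span_elementaryVectors]
    exact (isHermitian_iff_isSymm.mpr hM).iSup_eigenspace_toLin'_eq_top
  obtain ⟨b, hb⟩ := (Pi.basisFun ℝ (Fin n)).exists_basis_forall_mem_of_span_eq_top hspan
  refine ⟨b, fun i => ?_⟩
  obtain ⟨μ, hbμ, -, hmin⟩ := Set.mem_iUnion.mp (hb i)
  have hEig : ∀ g, g ∈ End.eigenspace (toLin' M) μ ↔ M *ᵥ g = μ • g := fun g => by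
    rw [End.mem_eigenspace_iff, toLin'_apply]
  exact ⟨μ, (hEig _).mp hbμ, fun g hg0 hgμ => hmin g ((hEig g).mpr hgμ) hg0⟩
end

section
/- Let Γ = (G,σ) be a connected signed graph on n vertices, let M be any n×n real symmetric matrix compatible with Γ, let λ_n be the largest eigenvalue of M, and let f_n be an eigenvector of M corresponding to λ_n. Then Γ is antibalanced if and only if 𝔚(f_n) = 𝔖(f_n) = n. Moreover, when Γ is antibalanced, λ_n is a simple eigenvalue of M. -/
open Matrix Polynomial

/-!
If `-σ` is balanced, it is a switching `-σ x y = s x * s y` (`s = ±1`) of the all-positive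
signature, and conjugating `M` by `diagonal s` gives a matrix whose off-diagonal entries are
`|M x y|`: non-negative, and positive exactly on the edges. For such a matrix the
Perron–Frobenius argument (compare the Rayleigh quotients of a top eigenvector `w` and of `|w|`,
then propagate zeros along the edges of the connected graph) shows that every top eigenvector is
nowhere zero with `w x * w y > 0` on the edges. Hence the top eigenspace is one-dimensional (a
combination of two top eigenvectors vanishing at one vertex vanishes), and back in `M` we get
`f x * σ x y * f y < 0` on every edge: there is no S- or W-walk at all, and every vertex is its
own nodal domain. Conversely, `n` strong nodal domains force `f` to be nowhere zero with no edge
of positive sign, so `-σ x y = sign (f x) * sign (f y)` and `-σ` is balanced.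
-/

namespace Polynomial

lemma count_roots_prod_X_sub_C {ι : Type*} [Fintype ι] (d : ι → ℝ) (a : ℝ) :
    (∏ i, (X - C (d i))).roots.count a = Fintype.card {i // d i = a} := by
  rw [Finset.prod_eq_multiset_prod, ← Function.comp_def (fun a => X - C a) d,
    ← Multiset.map_map, roots_multiset_prod_X_sub_C, Multiset.count_map, Fintype.card_subtype]
  simp_rw [eq_comm (a := a)]
  rfl

end Polynomial

namespace Matrix

variable {ι : Type*} [Fintype ι] {G : SimpleGraph ι} {A : Matrix ι ι ℝ} {r : ℝ}

lemma dotProduct_mulVec_eq_sum (v : ι → ℝ) :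
    v ⬝ᵥ A *ᵥ v = ∑ p : ι × ι, v p.1 * A p.1 p.2 * v p.2 := by
  rw [Fintype.sum_prod_type' fun x y => v x * A x y * v y]
  simp [dotProduct, mulVec, Finset.mul_sum, mul_assoc]

lemma pos_of_nonneg_of_mulVec_eq_smul (hconn : G.Connected) (hoff : ∀ x y, x ≠ y → 0 ≤ A x y)
    (hedge : ∀ x y, G.Adj x y → 0 < A x y) {h : ι → ℝ} (hh : 0 ≤ h) (h0 : h ≠ 0)
    (hAh : A *ᵥ h = r • h) (x : ι) : 0 < h x := by
  have hprop : ∀ x y, G.Adj x y → h x = 0 → h y = 0 := by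
    intro x y hxy hx
    have hrow : ∑ z, A x z * h z = 0 := by
      simpa [mulVec, dotProduct, hx] using congrFun hAh x
    have hterm : ∀ z ∈ Finset.univ, 0 ≤ A x z * h z := fun z _ => by
      rcases eq_or_ne x z with rfl | hxz
      · rw [hx, mul_zero]
      · exact mul_nonneg (hoff x z hxz) (hh z)
    exact (mul_eq_zero.mp ((Finset.sum_eq_zero_iff_of_nonneg hterm).mp hrow y
      (Finset.mem_univ y))).resolve_left (hedge x y hxy).ne'
  have hwalk : ∀ {a b : ι} (p : G.Walk a b), h a = 0 → h b = 0 := by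
    intro a b p
    induction p with
    | nil => exact id
    | cons hadj _ ih => exact fun ha => ih (hprop _ _ hadj ha)
  refine (hh x).lt_of_ne fun hx => h0 (funext fun y => ?_)
  exact hwalk (hconn.preconnected x y).some hx.symm

variable [DecidableEq ι]

lemma dotProduct_smul_one_sub_mulVec (v : ι → ℝ) :
    v ⬝ᵥ (r • 1 - A) *ᵥ v = r * (v ⬝ᵥ v) - v ⬝ᵥ A *ᵥ v := by
  simp [sub_mulVec, smul_mulVec, dotProduct_sub]

lemma dotProduct_mulVec_le_of_posSemidef (h : (r • 1 - A).PosSemidef) (v : ι → ℝ) :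
    v ⬝ᵥ A *ᵥ v ≤ r * (v ⬝ᵥ v) := by
  have := h.dotProduct_mulVec_nonneg v
  rw [star_trivial, dotProduct_smul_one_sub_mulVec] at this
  linarith

lemma mulVec_eq_smul_of_dotProduct_mulVec_eq (h : (r • 1 - A).PosSemidef) {v : ι → ℝ}
    (hv : v ⬝ᵥ A *ᵥ v = r * (v ⬝ᵥ v)) : A *ᵥ v = r • v := by
  have h0 : star v ⬝ᵥ (r • 1 - A) *ᵥ v = 0 := by
    rw [star_trivial, dotProduct_smul_one_sub_mulVec, hv, sub_self]
  have := (h.dotProduct_mulVec_zero_iff v).mp h0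
  rw [sub_mulVec, smul_mulVec, one_mulVec, sub_eq_zero] at this
  exact this.symm

lemma isRoot_charpoly_of_mulVec_eq_smul {K : Type*} [Field K] {B : Matrix ι ι K} {t : K}
    {v : ι → K} (hv : v ≠ 0) (h : B *ᵥ v = t • v) : B.charpoly.IsRoot t := by
  rw [← mem_spectrum_iff_isRoot_charpoly, ← spectrum_toLin']
  exact (Module.End.hasEigenvalue_of_hasEigenvector
    ⟨Module.End.mem_eigenspace_iff.mpr (by simpa using h), hv⟩).mem_spectrum

open Polynomial in
lemma IsHermitian.posSemidef_smul_one_sub (hA : A.IsHermitian) {μ : ι → ℝ}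
    (hchar : A.charpoly = ∏ i, (X - C (μ i))) (hle : ∀ i, μ i ≤ r) :
    (r • 1 - A).PosSemidef := by
  have h : ∀ t, A.charpoly.IsRoot t → t ≤ r := fun t ht => by
    obtain ⟨i, -, hi⟩ := Finset.prod_eq_zero_iff.mp (by simpa [hchar, eval_prod] using ht)
    exact (sub_eq_zero.mp (by simpa using hi)) ▸ hle i
  have hB : (r • 1 - A).IsHermitian := (isHermitian_one.smul (IsSelfAdjoint.all r)).sub hA
  refine hB.posSemidef_iff_eigenvalues_nonneg.mpr fun i => ?_
  have hvec := hB.mulVec_eigenvectorBasis i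
  rw [sub_mulVec, smul_mulVec, one_mulVec, sub_eq_iff_eq_add, ← sub_eq_iff_eq_add',
    ← sub_smul] at hvec
  have := h _ (isRoot_charpoly_of_mulVec_eq_smul
    (by simpa using hB.eigenvectorBasis.orthonormal.ne_zero i) hvec.symm)
  simp only [Pi.zero_apply]
  linarith

open Polynomial in
lemma IsHermitian.card_eq_card_eigenvalues_eq (hA : A.IsHermitian) {μ : ι → ℝ}
    (hchar : A.charpoly = ∏ i, (X - C (μ i))) (r : ℝ) :
    Fintype.card {i // μ i = r} = Fintype.card {i // hA.eigenvalues i = r} := by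
  rw [← count_roots_prod_X_sub_C, ← count_roots_prod_X_sub_C, ← hchar, hA.charpoly_eq]
  simp

lemma IsHermitian.card_eigenvalues_eq_le_one (hA : A.IsHermitian) (x₀ : ι)
    (h : ∀ v, v ≠ 0 → A *ᵥ v = r • v → v x₀ ≠ 0) :
    Fintype.card {i // hA.eigenvalues i = r} ≤ 1 := by
  rw [Fintype.card_le_one_iff]
  rintro ⟨i, hi⟩ ⟨j, hj⟩
  by_contra hij
  replace hij : i ≠ j := fun h => hij (Subtype.ext h)
  set b := hA.eigenvectorBasis
  have heig : ∀ k, hA.eigenvalues k = r → A *ᵥ ⇑(b k) = r • ⇑(b k) :=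
    fun k hk => hk ▸ hA.mulVec_eigenvectorBasis k
  have hb0 : ∀ k, ⇑(b k) ≠ 0 := by simpa using b.orthonormal.ne_zero
  set v : ι → ℝ := b j x₀ • ⇑(b i) - b i x₀ • ⇑(b j) with hv
  have hv0 : v = 0 := by
    by_contra hne
    refine h v hne ?_ (by simp [hv, mul_comm])
    rw [hv, mulVec_sub, mulVec_smul, mulVec_smul, heig i hi, heig j hj, smul_sub, smul_comm r,
      smul_comm r]
  have hpair := b.orthonormal.linearIndependent.comp ![i, j] fun a c => by
    fin_cases a <;> fin_cases c <;> simp [hij, hij.symm]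
  rw [show ⇑b ∘ ![i, j] = ![b i, b j] by ext a : 1; fin_cases a <;> rfl] at hpair
  have := (LinearIndependent.pair_iff.mp hpair (b j x₀) (-b i x₀) (by
    ext x
    simpa [hv, sub_eq_add_neg] using congrFun hv0 x)).1
  exact h _ (hb0 j) (heig j hj) this

/-- Perron–Frobenius: `|w|` has at least the Rayleigh quotient of `w`, so it is a top eigenvector
too, and the termwise comparison of the two quadratic forms is an equality. -/
lemma abs_mulVec_eq_smul_of_nonneg_offDiag (htop : (r • 1 - A).PosSemidef)
    (hoff : ∀ x y, x ≠ y → 0 ≤ A x y) {w : ι → ℝ} (hw : A *ᵥ w = r • w) :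
    A *ᵥ |w| = r • |w| ∧ ∀ x y, w x * A x y * w y = |w x| * A x y * |w y| := by
  have hle : ∀ p : ι × ι, w p.1 * A p.1 p.2 * w p.2 ≤ |w| p.1 * A p.1 p.2 * |w| p.2 := by
    rintro ⟨x, y⟩
    simp only [Pi.abs_apply]
    rcases eq_or_ne x y with rfl | hxy
    · rw [mul_right_comm, ← abs_mul_abs_self (w x), mul_right_comm]
    · calc w x * A x y * w y = A x y * (w x * w y) := by ring
        _ ≤ A x y * (|w x| * |w y|) :=
          mul_le_mul_of_nonneg_left ((le_abs_self _).trans (abs_mul _ _).le) (hoff x y hxy)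
        _ = |w x| * A x y * |w y| := by ring
  have hnorm : |w| ⬝ᵥ |w| = w ⬝ᵥ w :=
    Finset.sum_congr rfl fun x _ => abs_mul_abs_self (w x)
  have hrayleigh : w ⬝ᵥ A *ᵥ w = r * (w ⬝ᵥ w) := by rw [hw, dotProduct_smul, smul_eq_mul]
  have hmono : w ⬝ᵥ A *ᵥ w ≤ |w| ⬝ᵥ A *ᵥ |w| := by
    rw [dotProduct_mulVec_eq_sum, dotProduct_mulVec_eq_sum]
    exact Finset.sum_le_sum fun p _ => hle p
  have heq : |w| ⬝ᵥ A *ᵥ |w| = r * (|w| ⬝ᵥ |w|) :=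
    le_antisymm (dotProduct_mulVec_le_of_posSemidef htop _)
      (by rw [hnorm, ← hrayleigh]; exact hmono)
  refine ⟨mulVec_eq_smul_of_dotProduct_mulVec_eq htop heq, fun x y => ?_⟩
  have hsum_eq := (Finset.sum_eq_sum_iff_of_le fun p _ => hle p).mp (by
    rw [← dotProduct_mulVec_eq_sum, ← dotProduct_mulVec_eq_sum, heq, hnorm, hrayleigh])
  simpa using hsum_eq (x, y) (Finset.mem_univ _)

theorem ne_zero_and_mul_pos_of_mulVec_eq_smul (hconn : G.Connected)
    (htop : (r • 1 - A).PosSemidef) (hoff : ∀ x y, x ≠ y → 0 ≤ A x y)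
    (hedge : ∀ x y, G.Adj x y → 0 < A x y) {w : ι → ℝ} (hw0 : w ≠ 0) (hw : A *ᵥ w = r • w) :
    (∀ x, w x ≠ 0) ∧ ∀ x y, G.Adj x y → 0 < w x * w y := by
  obtain ⟨habs, hterm⟩ := abs_mulVec_eq_smul_of_nonneg_offDiag htop hoff hw
  have hpos := pos_of_nonneg_of_mulVec_eq_smul hconn hoff hedge (abs_nonneg w)
    (fun h => hw0 (funext fun x => by simpa using congrFun h x)) habs
  have hne : ∀ x, w x ≠ 0 := fun x => abs_pos.mp (hpos x)
  refine ⟨hne, fun x y hxy => ?_⟩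
  have : (w x * w y) * A x y = (|w x| * |w y|) * A x y := by linear_combination hterm x y
  rw [mul_right_cancel₀ (hedge x y hxy).ne' this]
  exact mul_pos (abs_pos.mpr (hne x)) (abs_pos.mpr (hne y))

end Matrix

section SignedGraphs

variable {V : Type*} {G : SimpleGraph V} {τ : V → V → ℝ}

lemma IsSignature.neg (hτ : IsSignature G τ) : IsSignature G fun x y => -τ x y :=
  ⟨fun x y => by simp only [hτ.1 x y],
    fun x y h => (hτ.2 x y h).symm.imp (by simp [·]) (by simp [·])⟩

lemma IsSignature.mul_self (hτ : IsSignature G τ) {x y : V} (h : G.Adj x y) :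
    τ x y * τ x y = 1 := by
  rcases hτ.2 x y h with h1 | h1 <;> simp [h1]

namespace SimpleGraph.Walk

noncomputable def sign (τ : V → V → ℝ) {x y : V} (p : G.Walk x y) : ℝ :=
  chainSign τ p.support

@[simp] lemma sign_nil {x : V} : (nil : G.Walk x x).sign τ = 1 := by
  simp [sign, chainSign]

@[simp] lemma sign_cons {x y z : V} (h : G.Adj x y) (p : G.Walk y z) :
    (cons h p).sign τ = τ x y * p.sign τ := by
  obtain ⟨t, ht⟩ : ∃ t, p.support = y :: t := ⟨_, p.cons_tail_support.symm⟩
  simp [sign, chainSign, ht]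

lemma sign_append {x y z : V} (p : G.Walk x y) (q : G.Walk y z) :
    (p.append q).sign τ = p.sign τ * q.sign τ := by
  induction p with
  | nil => simp
  | cons h p ih => rw [cons_append, sign_cons, sign_cons, ih, mul_assoc]

lemma sign_reverse (hτ : IsSignature G τ) {x y : V} (p : G.Walk x y) :
    p.reverse.sign τ = p.sign τ := by
  induction p with
  | nil => simp
  | cons h p ih => simp [sign_append, ih, hτ.1, mul_comm]

lemma sign_mul_self (hτ : IsSignature G τ) {x y : V} (p : G.Walk x y) :
    p.sign τ * p.sign τ = 1 := by
  induction p with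
  | nil => simp
  | cons h p ih =>
    rw [sign_cons]
    linear_combination (p.sign τ * p.sign τ) * hτ.mul_self h + ih

lemma sign_eq_mul_of_eq_mul {s : V → ℝ} (hs : ∀ x, s x * s x = 1)
    (h : ∀ x y, G.Adj x y → τ x y = s x * s y) {x y : V} (p : G.Walk x y) :
    p.sign τ = s x * s y := by
  induction p with
  | nil => exact (hs _).symm
  | @cons u v w hadj p ih =>
    rw [sign_cons, ih, h u v hadj]
    linear_combination (s u * s w) * hs v

/-- A path closed up by one edge is a cycle unless it is that edge traversed back. -/
lemma sign_cons_of_isPath (hτ : IsSignature G τ) (hbal : IsBalanced G τ) {x y : V}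
    (h : G.Adj x y) {p : G.Walk y x} (hp : p.IsPath) : (cons h p).sign τ = 1 := by
  by_cases he : s(x, y) ∈ p.edges
  · cases p with
    | nil => exact absurd h (G.loopless.irrefl x)
    | cons h' q =>
      rw [cons_isPath_iff] at hp
      rcases List.mem_cons.mp (edges_cons h' q ▸ he) with he | he
      · obtain rfl : x = _ := by simpa [h.ne] using he
        obtain rfl : q = nil := (isPath_iff_nil.mp hp.1).eq_nil
        simp [hτ.1 _ x, hτ.mul_self h]
      · exact absurd (q.snd_mem_support_of_mem_edges he) hp.2
  · exact hbal x _ ((cons_isCycle_iff p h).mpr ⟨hp, he⟩)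

lemma sign_bypass (hτ : IsSignature G τ) (hbal : IsBalanced G τ) [DecidableEq V] {x y : V}
    (p : G.Walk x y) : p.bypass.sign τ = p.sign τ := by
  induction p with
  | nil => rfl
  | @cons u v w h p ih =>
    simp only [bypass]
    split_ifs with hu
    · have hcycle := sign_cons_of_isPath hτ hbal h ((bypass_isPath p).takeUntil hu)
      rw [sign_cons] at hcycle
      calc (p.bypass.dropUntil u hu).sign τ
          = τ u v * (p.bypass.takeUntil u hu).sign τ * (p.bypass.dropUntil u hu).sign τ := by
            rw [hcycle, one_mul]
        _ = (cons h p).sign τ := by rw [mul_assoc, ← sign_append, take_spec, ih, sign_cons]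
    · rw [sign_cons, sign_cons, ih]

lemma sign_loop (hτ : IsSignature G τ) (hbal : IsBalanced G τ) {x : V} (c : G.Walk x x) :
    c.sign τ = 1 := by
  classical
  rw [← sign_bypass hτ hbal c, (isPath_iff_nil.mp (bypass_isPath c)).eq_nil, sign_nil]

end SimpleGraph.Walk

open SimpleGraph in
lemma IsBalanced.exists_switching (hτ : IsSignature G τ) (hbal : IsBalanced G τ)
    (hconn : G.Connected) :
    ∃ s : V → ℝ, (∀ x, s x * s x = 1) ∧ ∀ x y, G.Adj x y → τ x y = s x * s y := by
  obtain ⟨r⟩ := hconn.nonempty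
  let p (x : V) : G.Walk r x := (hconn.preconnected r x).some
  refine ⟨fun x => (p x).sign τ, fun x => (p x).sign_mul_self hτ, fun x y h => ?_⟩
  have hloop := ((p x).append (.cons h (p y).reverse)).sign_loop hτ hbal
  rw [Walk.sign_append, Walk.sign_cons, Walk.sign_reverse hτ] at hloop
  linear_combination ((p x).sign τ * (p y).sign τ) * hloop - τ x y * (p x).sign_mul_self hτ
    - τ x y * (p x).sign τ * (p x).sign τ * (p y).sign_mul_self hτ

lemma isBalanced_of_eq_mul {s : V → ℝ} (hs : ∀ x, s x * s x = 1)
    (h : ∀ x y, G.Adj x y → τ x y = s x * s y) : IsBalanced G τ :=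
  fun x c _ => (c.sign_eq_mul_of_eq_mul hs h).trans (hs x)

end SignedGraphs

structure IsSignAlternating {V : Type*} (G : SimpleGraph V) (σ : V → V → ℝ) (f : V → ℝ) :
    Prop where
  ne_zero : ∀ x, f x ≠ 0
  mul_neg : ∀ ⦃x y⦄, G.Adj x y → f x * σ x y * f y < 0

section NodalDomains

variable {V : Type*} {G : SimpleGraph V} {σ : V → V → ℝ} {f : V → ℝ}

lemma SConn.symm (hσ : ∀ x y, σ x y = σ y x) {x y : V} (h : SConn G σ f x y) :
    SConn G σ f y x := by
  obtain ⟨l, hlen, hchain, hx, hy⟩ := h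
  refine ⟨l.reverse, by simpa using hlen, List.isChain_reverse.mpr (hchain.imp ?_),
    by simpa using hy, by simpa using hx⟩
  rintro a b ⟨hab, hpos⟩
  exact ⟨hab.symm, by rw [hσ b a]; linarith [show f b * σ a b * f a = f a * σ a b * f b by ring]⟩

lemma SConn.trans {x y z : V} (h₁ : SConn G σ f x y) (h₂ : SConn G σ f y z) :
    SConn G σ f x z := by
  obtain ⟨l₁, hlen, hc₁, hx, hy⟩ := h₁
  obtain ⟨_ | ⟨y', _ | ⟨v, t⟩⟩, hlen₂, hc₂, hy', hz⟩ := h₂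
  · simp at hlen₂
  · simp at hlen₂
  obtain rfl : y' = y := by simpa using hy'
  obtain ⟨hstep, hc₂⟩ := List.isChain_cons_cons.mp hc₂
  have hne : l₁ ≠ [] := List.ne_nil_of_length_pos (by omega)
  refine ⟨l₁ ++ v :: t, by simp; omega, hc₁.append hc₂ ?_, ?_, ?_⟩
  · rw [hy]
    simp only [Option.mem_def, Option.some.injEq, List.head?_cons]
    rintro _ rfl _ rfl
    exact hstep
  · rwa [List.head?_append_of_ne_nil _ hne]
  · rwa [List.getLast?_append_of_ne_nil _ (List.cons_ne_nil v t)]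

lemma strongClass_eq_of_sConn (hσ : ∀ x y, σ x y = σ y x) {x y : V}
    (h : SConn G σ f x y) : strongClass G σ f x = strongClass G σ f y := by
  ext z
  simp only [strongClass, Set.mem_ofPred_eq]
  constructor
  · rintro ⟨hz, rfl | hzx⟩
    exacts [⟨hz, .inr h⟩, ⟨hz, .inr (hzx.trans h)⟩]
  · rintro ⟨hz, rfl | hzy⟩
    exacts [⟨hz, .inr (h.symm hσ)⟩, ⟨hz, .inr (hzy.trans (h.symm hσ))⟩]

lemma natCard_setOf_eq_singleton {C : V → Set V} (hf : ∀ x, f x ≠ 0) (hC : ∀ w, C w = {w}) :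
    Nat.card {D | ∃ w, f w ≠ 0 ∧ D = C w} = Nat.card V := by
  have : {D | ∃ w, f w ≠ 0 ∧ D = C w} = Set.range fun w : V => ({w} : Set V) := by
    ext D
    simp [hf, hC, eq_comm]
  rw [this, Nat.card_range_of_injective Set.singleton_injective]

namespace IsSignAlternating

lemma not_sConn (hf : IsSignAlternating G σ f) (x y : V) : ¬SConn G σ f x y := by
  rintro ⟨_ | ⟨u, _ | ⟨v, t⟩⟩, hlen, hchain, -, -⟩
  · simp at hlen
  · simp at hlen
  obtain ⟨hadj, hpos⟩ := (List.isChain_cons_cons.mp hchain).1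
  exact (hf.mul_neg hadj).not_gt hpos

lemma not_wConn (hf : IsSignAlternating G σ f) (x y : V) : ¬WConn G σ f x y := by
  rintro ⟨_ | ⟨u, _ | ⟨v, t⟩⟩, ⟨hlen, hchain, hsign⟩, -, -⟩
  · simp at hlen
  · simp at hlen
  -- the first two vertices are consecutive non-zeros of the walk
  have h := hsign ⟨0, by simp⟩ ⟨1, by simp⟩ (by simp) (hf.ne_zero u) (hf.ne_zero v)
    fun k hk₁ hk₂ => by rw [Fin.lt_def] at hk₁ hk₂; simp only at hk₁ hk₂; omega
  have hpair : chainSign σ [u, v] = σ u v := by simp [chainSign]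
  simp only [List.get_eq_getElem, List.drop_zero, Nat.sub_zero, Nat.reduceAdd,
    List.take_succ_cons, List.take_zero, hpair] at h
  exact (hf.mul_neg (List.isChain_cons_cons.mp hchain).1).not_gt h

lemma numStrong_eq (hf : IsSignAlternating G σ f) : numStrong G σ f = Nat.card V :=
  natCard_setOf_eq_singleton hf.ne_zero fun w => by
    ext x
    simpa [strongClass, hf.not_sConn x w] using fun h => h ▸ hf.ne_zero x

lemma numWeak_eq (hf : IsSignAlternating G σ f) : numWeak G σ f = Nat.card V :=
  natCard_setOf_eq_singleton hf.ne_zero fun w => by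
    ext x
    simpa [weakClass, hf.not_wConn x] using fun h => h ▸ hf.ne_zero x

lemma isAntibalanced (hf : IsSignAlternating G σ f) (hσ : IsSignature G σ) :
    IsAntibalanced G σ := by
  refine isBalanced_of_eq_mul (s := fun x => Real.sign (f x)) (fun x => ?_) fun x y hxy => ?_
  · rcases Real.sign_apply_eq_of_ne_zero _ (hf.ne_zero x) with h | h <;> simp [h]
  · have hneg := hf.mul_neg hxy
    rcases (hf.ne_zero x).lt_or_gt with hx | hx <;> rcases (hf.ne_zero y).lt_or_gt with hy | hy <;>
      rcases hσ.2 x y hxy with hs | hs <;>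
      simp only [hs, Real.sign_of_neg, Real.sign_of_pos, hx, hy] at hneg ⊢ <;> nlinarith

end IsSignAlternating

lemma isSignAlternating_of_numStrong_eq [Finite V] (hσ : IsSignature G σ)
    (h : numStrong G σ f = Nat.card V) : IsSignAlternating G σ f := by
  let ψ : {x | f x ≠ 0} → strongDomains G σ f := fun x => ⟨_, x, x.2, rfl⟩
  have hψ : ψ.Surjective := by
    rintro ⟨_, w, hw, rfl⟩
    exact ⟨⟨w, hw⟩, rfl⟩
  have hcard : Nat.card (strongDomains G σ f) ≤ Nat.card {x | f x ≠ 0} :=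
    Nat.card_le_card_of_surjective ψ hψ
  have hsupp : {x | f x ≠ 0} = Set.univ := by
    refine Set.eq_of_subset_of_ncard_le (Set.subset_univ _) ?_ Set.finite_univ
    rw [Set.ncard_univ, ← Nat.card_coe_set_eq]
    exact h ▸ hcard
  have hne : ∀ x, f x ≠ 0 := fun x => Set.eq_univ_iff_forall.mp hsupp x
  have hψinj : ψ.Injective := (hψ.bijective_of_nat_card_le (by
    rw [← numStrong, h, hsupp, Nat.card_univ])).1
  refine ⟨hne, fun x y hxy => ?_⟩
  have hprod : f x * σ x y * f y ≠ 0 :=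
    mul_ne_zero (mul_ne_zero (hne x) (by rcases hσ.2 x y hxy with h1 | h1 <;> simp [h1])) (hne y)
  refine hprod.lt_or_gt.resolve_right fun hpos => hxy.ne ?_
  have hS : SConn G σ f x y := ⟨[x, y], le_rfl, List.isChain_pair.mpr ⟨hxy, hpos⟩, rfl, rfl⟩
  exact congrArg Subtype.val (@hψinj ⟨x, hne x⟩ ⟨y, hne y⟩
    (Subtype.ext (strongClass_eq_of_sConn hσ.1 hS)))

end NodalDomains

section Switching

open Matrix

variable {ι : Type*} [Fintype ι] [DecidableEq ι] {G : SimpleGraph ι} {σ : ι → ι → ℝ}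
  {M : Matrix ι ι ℝ} {r : ℝ}

/-- Switching by `s` turns `M` into `D M D` with `D = diagonal s`, which is positive on the edges
and zero off them, so the Perron–Frobenius argument applies to it. -/
theorem Compatible.isSignAlternating_of_switching (hcompat : Compatible M G σ)
    (hconn : G.Connected) {s : ι → ℝ} (hs : ∀ x, s x * s x = 1)
    (hsw : ∀ x y, G.Adj x y → -σ x y = s x * s y) (htop : (r • 1 - M).PosSemidef)
    {g : ι → ℝ} (hg0 : g ≠ 0) (hg : M *ᵥ g = r • g) : IsSignAlternating G σ g := by
  set D : Matrix ι ι ℝ := diagonal s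
  have hDD : D * D = 1 := by simp [D, hs]
  have hentry : ∀ x y, (D * M * D) x y = s x * M x y * s y := by
    simp [D, diagonal_mul, mul_diagonal]
  have htop' : (r • 1 - D * M * D).PosSemidef := by
    have := htop.conjTranspose_mul_mul_same D
    rwa [show Dᴴ = D by simp [D], mul_sub, sub_mul, mul_smul_comm, smul_mul_assoc, mul_one,
      hDD] at this
  have hedge : ∀ x y, G.Adj x y → 0 < (D * M * D) x y := by
    intro x y hxy
    have hM : M x y ≠ 0 := ((hcompat.1 x y).mp hxy).2
    calc (D * M * D) x y = M x y / |M x y| * M x y := by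
          rw [hentry, ← neg_neg (M x y / |M x y|), ← hcompat.2 x y hxy, hsw x y hxy]
          ring
      _ = |M x y| := by
          rw [div_mul_eq_mul_div, ← abs_mul_abs_self, mul_self_div_self]
      _ > 0 := abs_pos.mpr hM
  have hoff : ∀ x y, x ≠ y → 0 ≤ (D * M * D) x y := by
    intro x y hne
    by_cases hxy : G.Adj x y
    · exact (hedge x y hxy).le
    · have : M x y = 0 := not_not.mp fun hM => hxy ((hcompat.1 x y).mpr ⟨hne, hM⟩)
      simp [hentry, this]
  have heig : (D * M * D) *ᵥ (D *ᵥ g) = r • (D *ᵥ g) := by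
    rw [mulVec_mulVec, mul_assoc, hDD, mul_one, ← mulVec_mulVec, hg, mulVec_smul]
  have hne0 : D *ᵥ g ≠ 0 := fun h => hg0 (by
    rw [← one_mulVec g, ← hDD, ← mulVec_mulVec, h, mulVec_zero])
  obtain ⟨hne, hpos⟩ := ne_zero_and_mul_pos_of_mulVec_eq_smul hconn htop' hoff hedge hne0 heig
  simp only [D, mulVec_diagonal] at hne hpos
  refine ⟨fun x => right_ne_zero_of_mul (hne x), fun x y hxy => ?_⟩
  have : g x * σ x y * g y = -(s x * g x * (s y * g y)) := by
    linear_combination (-(g x * g y)) * hsw x y hxy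
  linarith [hpos x y hxy]

end Switching

/-- a connected signed graph is antibalanced iff 𝔚(f_n) = 𝔖(f_n) = n for an
eigenvector f_n of the largest eigenvalue of any compatible symmetric matrix; moreover in
the antibalanced case the largest eigenvalue is simple. -/
theorem stmt_4 (n : ℕ) (hn : 0 < n) (G : SimpleGraph (Fin n)) (σ : Fin n → Fin n → ℝ)
    (hσ : IsSignature G σ) (hconn : G.Connected)
    (M : Matrix (Fin n) (Fin n) ℝ) (hM : M.IsSymm) (hcompat : Compatible M G σ)
    (μ : Fin n → ℝ) (hmono : Monotone μ)
    (hchar : M.charpoly = ∏ i, (Polynomial.X - Polynomial.C (μ i)))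
    (f : Fin n → ℝ) (hf : f ≠ 0)
    (heig : M.mulVec f = μ ⟨n - 1, by omega⟩ • f) :
    (IsAntibalanced G σ ↔ (numWeak G σ f = n ∧ numStrong G σ f = n)) ∧
    (IsAntibalanced G σ → Nat.card {i : Fin n | μ i = μ ⟨n - 1, by omega⟩} = 1) := by
  classical
  set top : Fin n := ⟨n - 1, by omega⟩
  have hMh : M.IsHermitian := Matrix.isHermitian_iff_isSymm.mpr hM
  have htop : (μ top • 1 - M).PosSemidef :=
    hMh.posSemidef_smul_one_sub hchar fun i => hmono (Fin.mk_le_mk.mpr (by omega))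
  have halt : IsAntibalanced G σ → ∀ g, g ≠ 0 → M *ᵥ g = μ top • g → IsSignAlternating G σ g := by
    intro hanti g hg0 hg
    obtain ⟨s, hs, hsw⟩ := hanti.exists_switching hσ.neg hconn
    exact hcompat.isSignAlternating_of_switching hconn hs hsw htop hg0 hg
  refine ⟨⟨fun hanti => ?_, fun ⟨_, hS⟩ => ?_⟩, fun hanti => ?_⟩
  · have hf' := halt hanti f hf heig
    simpa using And.intro hf'.numWeak_eq hf'.numStrong_eq
  · exact (isSignAlternating_of_numStrong_eq hσ (by simpa using hS)).isAntibalanced hσ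
  · have hpos : 0 < Fintype.card {i // μ i = μ top} := Fintype.card_pos_iff.mpr ⟨⟨top, rfl⟩⟩
    have hle := hMh.card_eigenvalues_eq_le_one top fun v hv0 hv => (halt hanti v hv0 hv).ne_zero top
    rw [← hMh.card_eq_card_eigenvalues_eq hchar] at hle
    show Nat.card {i // μ i = μ top} = 1
    rw [Nat.card_eq_fintype_card]
    omega
end

section
/- Let Γ = (G,σ) be a signed graph where G = (V,E) is a forest with |V| = n. For any function f : V → ℝ, one has 𝔖(f) + 𝔖̄(f) = n + c − 2z + e_0, where 𝔖̄(f) is the number of strong nodal domains of f on the negation −Γ = (G,−σ), z = |{x ∈ V : f(x) = 0}|, e_0 = |{{x,y} ∈ E : f(x) = 0 or f(y) = 0}|, and c is the number of connected components of G. -/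
open Matrix Polynomial

/-!
Let `G⁺` and `G⁻` be the subgraphs of the forest `G` on the edges `xy` with `f x σ_xy f y`
positive, resp. negative. The strong nodal domains of `f` on `Γ` (resp. `-Γ`) are exactly the
components of `G⁺` (resp. `G⁻`) other than the isolated zeros of `f`, so `𝔖(f) + z = c(G⁺)` and
`𝔖̄(f) + z = c(G⁻)`. Every edge of `G` lies in `G⁺`, in `G⁻`, or has a zero endpoint, and all three
graphs are forests, so Euler's formula `|E| + c = n` for forests yields the identity.
-/

namespace SimpleGraph

variable {V : Type*} {G : SimpleGraph V} {x y : V}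

lemma IsBridge.reachable_deleteEdges_or (hbr : G.IsBridge s(x, y)) {u v : V} (p : G.Walk u v) :
    (G.deleteEdges {s(x, y)}).Reachable u v ∨
      (G.deleteEdges {s(x, y)}).Reachable u x ∧ (G.deleteEdges {s(x, y)}).Reachable y v ∨
      (G.deleteEdges {s(x, y)}).Reachable u y ∧ (G.deleteEdges {s(x, y)}).Reachable x v := by
  rw [isBridge_iff] at hbr
  induction p with
  | nil => exact Or.inl .rfl
  | @cons u w v h q ih =>
    by_cases he : s(u, w) = s(x, y)
    · rcases Sym2.eq_iff.mp he with ⟨rfl, rfl⟩ | ⟨rfl, rfl⟩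
      · rcases ih with h₁ | ⟨h₂, _⟩ | ⟨_, h₃⟩
        · exact Or.inr (Or.inl ⟨.rfl, h₁⟩)
        · exact absurd h₂.symm hbr
        · exact Or.inl h₃
      · rcases ih with h₁ | ⟨_, h₂⟩ | ⟨h₃, _⟩
        · exact Or.inr (Or.inr ⟨.rfl, h₁⟩)
        · exact Or.inl h₂
        · exact absurd h₃ hbr
    · have hadj : (G.deleteEdges {s(x, y)}).Adj u w := deleteEdges_adj.mpr ⟨h, he⟩
      rcases ih with h₁ | ⟨h₂, h₃⟩ | ⟨h₂, h₃⟩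
      · exact Or.inl (hadj.reachable.trans h₁)
      · exact Or.inr (Or.inl ⟨hadj.reachable.trans h₂, h₃⟩)
      · exact Or.inr (Or.inr ⟨hadj.reachable.trans h₂, h₃⟩)

/-- Every component of `G` is the image of exactly one component of `G - xy`, except the
component of `x`, which is also the image of the component of `y`. -/
lemma IsBridge.card_connectedComponent_deleteEdges [Finite V] (hadj : G.Adj x y)
    (hbr : G.IsBridge s(x, y)) :
    Nat.card (G.deleteEdges {s(x, y)}).ConnectedComponent = Nat.card G.ConnectedComponent + 1 := by
  set G' := G.deleteEdges {s(x, y)}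
  have hle : G' ≤ G := deleteEdges_le _
  set φ : G'.ConnectedComponent → G.ConnectedComponent := ConnectedComponent.map (.ofLE hle)
  set S : Set G'.ConnectedComponent := Set.univ \ {G'.connectedComponentMk y}
  have hS : ∀ v, G'.connectedComponentMk v ∈ S ↔ ¬ G'.Reachable v y := by
    simp [S, ConnectedComponent.eq]
  have hinj : S.InjOn φ := by
    intro C hC D hD hCD
    induction C using ConnectedComponent.ind with | h u => ?_
    induction D using ConnectedComponent.ind with | h v => ?_
    rw [hS] at hC hD
    simp only [φ, ConnectedComponent.map_mk, ConnectedComponent.eq] at hCD ⊢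
    rcases hbr.reachable_deleteEdges_or hCD.some with h | ⟨_, h⟩ | ⟨h, _⟩
    · exact h
    · exact absurd h.symm hD
    · exact absurd h hC
  have hsurj : φ '' S = Set.univ := by
    refine Set.eq_univ_of_forall fun C => ?_
    induction C using ConnectedComponent.ind with | h v => ?_
    by_cases hv : G'.Reachable v y
    · refine ⟨G'.connectedComponentMk x, (hS x).mpr hbr, ?_⟩
      simpa [φ, ConnectedComponent.eq] using hadj.reachable.trans (hv.symm.mono hle)
    · exact ⟨G'.connectedComponentMk v, (hS v).mpr hv, rfl⟩
  calc Nat.card G'.ConnectedComponent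
      = S.ncard + 1 := by rw [Set.ncard_sdiff_singleton_add_one (Set.mem_univ _), Set.ncard_univ]
    _ = Nat.card G.ConnectedComponent + 1 := by rw [← hinj.ncard_image, hsurj, Set.ncard_univ]

lemma card_connectedComponent_bot [Finite V] :
    Nat.card (⊥ : SimpleGraph V).ConnectedComponent = Nat.card V :=
  (Nat.card_eq_of_bijective _ ⟨fun _ _ h => reachable_bot.mp (ConnectedComponent.eq.mp h),
    Quot.mk_surjective⟩).symm

lemma IsAcyclic.card_edgeSet_add_card_connectedComponent [Finite V] (hG : G.IsAcyclic) :
    Nat.card G.edgeSet + Nat.card G.ConnectedComponent = Nat.card V := by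
  induction hn : Nat.card G.edgeSet generalizing G with
  | zero =>
    have : G = ⊥ :=
      edgeSet_eq_empty.mp ((Set.ncard_eq_zero).mp (by rwa [← Nat.card_coe_set_eq]))
    subst this
    rw [zero_add, card_connectedComponent_bot]
  | succ n ih =>
    obtain ⟨e, he⟩ : G.edgeSet.Nonempty := Set.nonempty_of_ncard_ne_zero (by
      rw [← Nat.card_coe_set_eq, hn]; exact n.succ_ne_zero)
    induction e using Sym2.ind with | h x y => ?_
    have hbr : G.IsBridge s(x, y) := isAcyclic_iff_forall_isBridge.mp hG he
    have hn' : Nat.card (G.deleteEdges {s(x, y)}).edgeSet = n := by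
      rw [Nat.card_coe_set_eq] at hn ⊢
      rw [edgeSet_deleteEdges, Set.ncard_sdiff_singleton_of_mem he, hn, Nat.add_sub_cancel]
    have := ih (hG.anti (deleteEdges_le _)) hn'
    rw [hbr.card_connectedComponent_deleteEdges he] at this
    omega

end SimpleGraph

section StrongNodalDomains

open SimpleGraph

variable {V : Type*} {G : SimpleGraph V} {σ : V → V → ℝ} {f : V → ℝ}

lemma posSubgraph_le : posSubgraph G σ f ≤ G := fun _ _ h => h.1

lemma SimpleGraph.IsAcyclic.posSubgraph (hG : G.IsAcyclic) : (posSubgraph G σ f).IsAcyclic :=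
  hG.anti posSubgraph_le

lemma ne_zero_of_posSubgraph_adj {x y : V} (h : (posSubgraph G σ f).Adj x y) : f x ≠ 0 := by
  rintro h0
  simpa [h0] using h.2.1

lemma eq_of_posSubgraph_reachable_of_eq_zero {x y : V} (h0 : f x = 0)
    (h : (posSubgraph G σ f).Reachable x y) : x = y := by
  obtain ⟨_ | ⟨hxz, _⟩⟩ := h
  · rfl
  · exact absurd h0 (ne_zero_of_posSubgraph_adj hxz)

lemma posSubgraph_adj_iff (hsym : ∀ a b, σ a b = σ b a) {x y : V} :
    (posSubgraph G σ f).Adj x y ↔ G.Adj x y ∧ 0 < f x * σ x y * f y := by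
  have : f y * σ y x * f x = f x * σ x y * f y := by rw [hsym y x]; ring
  simp only [posSubgraph, this, and_self]

lemma sWalkStep_eq_posSubgraph_adj (hsym : ∀ a b, σ a b = σ b a) :
    SWalkStep G σ f = (posSubgraph G σ f).Adj := by
  ext x y
  exact (posSubgraph_adj_iff hsym).symm

lemma sConn_iff_reachable (hsym : ∀ a b, σ a b = σ b a) {x y : V} (hxy : x ≠ y) :
    SConn G σ f x y ↔ (posSubgraph G σ f).Reachable x y := by
  rw [SConn, sWalkStep_eq_posSubgraph_adj hsym]
  constructor
  · rintro ⟨l, hl, hc, hx, hy⟩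
    have hne : l ≠ [] := List.ne_nil_of_length_pos (by omega)
    rw [List.head?_eq_some_head hne, Option.some_inj] at hx
    rw [List.getLast?_eq_some_getLast hne, Option.some_inj] at hy
    exact hx ▸ hy ▸ ⟨Walk.ofSupport l hne hc⟩
  · rintro ⟨p⟩
    refine ⟨p.support, ?_, p.isChain_adj_support, by cases p <;> simp,
      by simp [List.getLast?_eq_some_getLast p.support_ne_nil]⟩
    have : p.length ≠ 0 := fun h0 => hxy (Walk.eq_of_length_eq_zero h0)
    rw [Walk.length_support]
    omega

lemma strongClass_eq_supp (hsym : ∀ a b, σ a b = σ b a) {w : V} (hw : f w ≠ 0) :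
    strongClass G σ f w = ((posSubgraph G σ f).connectedComponentMk w).supp := by
  ext x
  rw [ConnectedComponent.mem_supp_iff, ConnectedComponent.eq]
  by_cases hxw : x = w
  · subst hxw
    simp [strongClass, hw]
  · rw [strongClass, Set.mem_ofPred_eq, sConn_iff_reachable hsym hxw]
    refine ⟨fun h => h.2.resolve_left hxw, fun h => ⟨fun h0 => hxw ?_, Or.inr h⟩⟩
    exact eq_of_posSubgraph_reachable_of_eq_zero h0 h

/-- Each zero of `f` is an isolated vertex of `posSubgraph`; the other components are the
strong nodal domains. -/
lemma numStrong_add_card_zero [Finite V] (hsym : ∀ a b, σ a b = σ b a) :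
    numStrong G σ f + Nat.card {x : V | f x = 0}
      = Nat.card (posSubgraph G σ f).ConnectedComponent := by
  set H := posSubgraph G σ f
  set S : Set H.ConnectedComponent := {C | ∃ w, f w ≠ 0 ∧ C = H.connectedComponentMk w}
  have hdomains : strongDomains G σ f = ConnectedComponent.supp '' S := by
    ext D
    simp only [strongDomains, S, Set.mem_ofPred_eq, Set.mem_image]
    constructor
    · rintro ⟨w, hw, rfl⟩
      exact ⟨_, ⟨w, hw, rfl⟩, (strongClass_eq_supp hsym hw).symm⟩
    · rintro ⟨_, ⟨w, hw, rfl⟩, rfl⟩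
      exact ⟨w, hw, (strongClass_eq_supp hsym hw).symm⟩
  have hcompl : Sᶜ = H.connectedComponentMk '' {x | f x = 0} := by
    ext C
    induction C using ConnectedComponent.ind with | h v => ?_
    simp only [S, Set.mem_compl_iff, Set.mem_ofPred_eq, Set.mem_image, ConnectedComponent.eq,
      not_exists, not_and]
    constructor
    · exact fun hv => ⟨v, not_not.mp fun h0 => hv v h0 .rfl, .rfl⟩
    · rintro ⟨u, hu, huv⟩ w hw hvw
      exact hw (eq_of_posSubgraph_reachable_of_eq_zero hu (huv.trans hvw) ▸ hu)
  have hzero : Sᶜ.ncard = Nat.card {x : V | f x = 0} := by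
    rw [hcompl, Nat.card_coe_set_eq]
    exact Set.InjOn.ncard_image fun u hu v _ huv =>
      eq_of_posSubgraph_reachable_of_eq_zero hu (ConnectedComponent.eq.mp huv)
  rw [numStrong, Nat.card_coe_set_eq, hdomains,
    ConnectedComponent.supp_injective.injOn.ncard_image, ← hzero, Set.ncard_add_ncard_compl]

end StrongNodalDomains

section EdgePartition

open SimpleGraph

variable {V : Type*} {G : SimpleGraph V} {σ : V → V → ℝ} {f : V → ℝ}

lemma card_edgeSet_posSubgraph_add_posSubgraph_neg [Finite V] (hσ : IsSignature G σ) :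
    Nat.card (posSubgraph G σ f).edgeSet
      + Nat.card (posSubgraph G (fun x y => -(σ x y)) f).edgeSet
      + Nat.card {e : Sym2 V | e ∈ G.edgeSet ∧ ∃ x ∈ e, f x = 0}
      = Nat.card G.edgeSet := by
  obtain ⟨hsym, hpm⟩ := hσ
  set A := (posSubgraph G σ f).edgeSet
  set B := (posSubgraph G (fun x y => -(σ x y)) f).edgeSet
  set Z := {e : Sym2 V | e ∈ G.edgeSet ∧ ∃ x ∈ e, f x = 0}
  have hA : ∀ x y, s(x, y) ∈ A ↔ G.Adj x y ∧ 0 < f x * σ x y * f y := fun x y =>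
    posSubgraph_adj_iff hsym
  have hB : ∀ x y, s(x, y) ∈ B ↔ G.Adj x y ∧ f x * σ x y * f y < 0 := fun x y => by
    rw [mem_edgeSet, posSubgraph_adj_iff fun a b => congrArg Neg.neg (hsym a b)]
    simp only [mul_neg, neg_mul, Left.neg_pos_iff]
  have hZ : ∀ x y, s(x, y) ∈ Z ↔ G.Adj x y ∧ f x * σ x y * f y = 0 := fun x y => by
    simp only [Z, Set.mem_ofPred_eq, mem_edgeSet, Sym2.mem_iff, exists_eq_or_imp, exists_eq_left]
    refine and_congr_right fun hxy => ?_
    have hσ0 : σ x y ≠ 0 := by rcases hpm x y hxy with h | h <;> simp [h]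
    simp [hσ0, or_comm]
  have hdisjAB : Disjoint A (B ∪ Z) := Set.disjoint_left.mpr fun e => by
    induction e using Sym2.ind with | h x y => ?_
    simp only [Set.mem_union, hA, hB, hZ]
    intro h h'
    rcases h' with h' | h' <;> linarith [h.2, h'.2]
  have hdisjBZ : Disjoint B Z := Set.disjoint_left.mpr fun e => by
    induction e using Sym2.ind with | h x y => ?_
    simp only [hB, hZ]
    intro h h'
    linarith [h.2, h'.2]
  have hunion : A ∪ (B ∪ Z) = G.edgeSet := by
    ext e
    induction e using Sym2.ind with | h x y => ?_
    simp only [Set.mem_union, hA, hB, hZ, mem_edgeSet]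
    constructor
    · rintro (h | h | h) <;> exact h.1
    · intro h
      rcases lt_trichotomy (f x * σ x y * f y) 0 with h' | h' | h'
      exacts [Or.inr (Or.inl ⟨h, h'⟩), Or.inr (Or.inr ⟨h, h'⟩), Or.inl ⟨h, h'⟩]
  simp only [Nat.card_coe_set_eq]
  rw [← hunion, Set.ncard_union_eq hdisjAB, Set.ncard_union_eq hdisjBZ, add_assoc]

end EdgePartition

/-- duality on forests, 𝔖(f) + 𝔖̄(f) = n + c - 2z + e₀. -/
theorem stmt_6 {V : Type*} [Fintype V] (G : SimpleGraph V) (hforest : G.IsAcyclic)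
    (σ : V → V → ℝ) (hσ : IsSignature G σ) (f : V → ℝ) :
    numStrong G σ f + numStrong G (fun x y => -(σ x y)) f + 2 * Nat.card {x : V | f x = 0}
      = Fintype.card V + Nat.card G.ConnectedComponent
        + Nat.card {e : Sym2 V | e ∈ G.edgeSet ∧ ∃ x ∈ e, f x = 0} := by
  have hsymNeg : ∀ a b, -σ a b = -σ b a := fun a b => congrArg Neg.neg (hσ.1 a b)
  have hdomPos := numStrong_add_card_zero (G := G) (f := f) hσ.1
  have hdomNeg := numStrong_add_card_zero (G := G) (f := f) hsymNeg
  have hEulerPos := (hforest.posSubgraph (σ := σ) (f := f)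
    ).card_edgeSet_add_card_connectedComponent
  have hEulerNeg := (hforest.posSubgraph (σ := fun x y => -σ x y) (f := f)
    ).card_edgeSet_add_card_connectedComponent
  have hEuler := hforest.card_edgeSet_add_card_connectedComponent
  have hedges := card_edgeSet_posSubgraph_add_posSubgraph_neg (f := f) hσ
  rw [← Nat.card_eq_fintype_card]
  omega
end

section
/- Let Γ = (G,σ) be a connected signed graph. Then there exists a real symmetric matrix M compatible with Γ such that the smallest eigenvalue λ_1 of M is simple and the corresponding eigenvector f_1 is nonzero at every vertex; moreover 𝔖(f_1) = 1, i.e., the unique strong nodal domain of f_1 is the whole graph G. -/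
open Matrix Polynomial

/-!
Fix a spanning tree `T` of `G` and switch `σ` by the product `s` of the signs along the tree paths
to the root, so that every tree edge becomes positive. Take the Laplacian of the switched graph
with weight `1` on tree edges and `±ε` on the other edges, and switch back. Every
`((s g) x - (s g) y)²` is bounded by a multiple of the tree energy `∑ ((s g) x - (s g) (parent x))²`,
so for `ε` small the quadratic form still dominates `ε` times the tree energy. Hence the matrix is
positive semidefinite with kernel spanned by `s`, which is nowhere zero, and the positive tree
edges join all vertices by S-walks.
-/

section StrongNodalDomains

variable {V : Type*} {G : SimpleGraph V} {σ : V → V → ℝ} {f : V → ℝ}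

theorem SConn.single {x y : V} (h : SWalkStep G σ f x y) : SConn G σ f x y :=
  ⟨[x, y], le_rfl, List.isChain_pair.mpr h, rfl, rfl⟩

theorem SConn.tail {x y z : V} (hxy : SConn G σ f x y) (hyz : SWalkStep G σ f y z) :
    SConn G σ f x z := by
  obtain ⟨l, hlen, hchain, hhead, hlast⟩ := hxy
  have hl : l ≠ [] := by rintro rfl; simp at hlen
  refine ⟨l ++ [z], by simp; omega, ?_, by rwa [List.head?_append_of_ne_nil _ hl], by simp⟩
  refine List.isChain_append.mpr ⟨hchain, List.isChain_singleton z, ?_⟩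
  rw [hlast]
  rintro _ hy _ hz
  cases hy; cases hz
  exact hyz

theorem eq_or_sConn_of_reflTransGen {x y : V} (h : Relation.ReflTransGen (SWalkStep G σ f) x y) :
    x = y ∨ SConn G σ f x y := by
  induction h with
  | refl => exact Or.inl rfl
  | tail _ hstep ih =>
    rcases ih with rfl | hconn
    · exact Or.inr (.single hstep)
    · exact Or.inr (hconn.tail hstep)

theorem eq_or_sConn_of_reachable {x y : V} (h : (posSubgraph G σ f).Reachable x y) :
    x = y ∨ SConn G σ f x y :=
  eq_or_sConn_of_reflTransGen <|
    Relation.ReflTransGen.mono (fun _ _ hadj => ⟨hadj.1, hadj.2.1⟩) _ _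
      ((SimpleGraph.reachable_iff_reflTransGen x y).mp h)

theorem numStrong_eq_one_of_connected (hf : ∀ x, f x ≠ 0)
    (hconn : (posSubgraph G σ f).Connected) : numStrong G σ f = 1 := by
  have hclass : ∀ w, strongClass G σ f w = Set.univ := fun w =>
    Set.eq_univ_of_forall fun x => ⟨hf x, eq_or_sConn_of_reachable (hconn x w)⟩
  obtain ⟨w⟩ := hconn.nonempty
  have hdomains : strongDomains G σ f = {Set.univ} := by
    ext D
    refine ⟨?_, fun hD => ⟨w, hf w, (hD.trans (hclass w).symm)⟩⟩
    rintro ⟨v, -, rfl⟩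
    exact hclass v
  rw [numStrong, hdomains, Nat.card_unique]

end StrongNodalDomains

section WeightedLaplacian

variable {V : Type*} [Fintype V] [DecidableEq V]

def weightedLaplacian (B : Matrix V V ℝ) : Matrix V V ℝ :=
  diagonal (fun x => ∑ y, B x y) - B

theorem weightedLaplacian_isSymm {B : Matrix V V ℝ} (hB : B.IsSymm) :
    (weightedLaplacian B).IsSymm :=
  (isSymm_diagonal _).sub hB

theorem weightedLaplacian_mulVec_apply (B : Matrix V V ℝ) (h : V → ℝ) (x : V) :
    (weightedLaplacian B *ᵥ h) x = ∑ y, B x y * (h x - h y) := by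
  rw [weightedLaplacian, sub_mulVec, Pi.sub_apply, mulVec_diagonal, Finset.sum_mul]
  simp only [mul_sub, Finset.sum_sub_distrib, mulVec, dotProduct]

theorem weightedLaplacian_mulVec_one (B : Matrix V V ℝ) : weightedLaplacian B *ᵥ 1 = 0 := by
  ext x
  simp [weightedLaplacian_mulVec_apply]

theorem two_mul_dotProduct_weightedLaplacian_mulVec {B : Matrix V V ℝ} (hB : B.IsSymm)
    (h : V → ℝ) :
    2 * (h ⬝ᵥ weightedLaplacian B *ᵥ h) = ∑ x, ∑ y, B x y * (h x - h y) ^ 2 := by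
  have hform : h ⬝ᵥ weightedLaplacian B *ᵥ h = ∑ x, ∑ y, B x y * (h x * (h x - h y)) := by
    simp only [dotProduct, weightedLaplacian_mulVec_apply, Finset.mul_sum]
    exact Finset.sum_congr rfl fun x _ => Finset.sum_congr rfl fun y _ => by ring
  have hswap : ∑ x, ∑ y, B x y * (h x * (h x - h y)) = ∑ x, ∑ y, B x y * (h y * (h y - h x)) := by
    rw [Finset.sum_comm]
    simp_rw [hB.apply]
  calc 2 * (h ⬝ᵥ weightedLaplacian B *ᵥ h)
      = ∑ x, ∑ y, B x y * (h x * (h x - h y)) + ∑ x, ∑ y, B x y * (h y * (h y - h x)) := by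
        rw [← hswap, hform, two_mul]
    _ = ∑ x, ∑ y, B x y * (h x - h y) ^ 2 := by
        simp only [← Finset.sum_add_distrib]
        exact Finset.sum_congr rfl fun x _ => Finset.sum_congr rfl fun y _ => by ring

theorem diagonal_mul_mul_diagonal_apply (s : V → ℝ) (A : Matrix V V ℝ) (x y : V) :
    (diagonal s * A * diagonal s) x y = s x * A x y * s y := by
  rw [mul_diagonal, diagonal_mul]

theorem diagonal_mul_mul_diagonal_mulVec (s g : V → ℝ) (A : Matrix V V ℝ) :
    (diagonal s * A * diagonal s) *ᵥ g = s * A *ᵥ (s * g) := by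
  have hdiag : ∀ v, diagonal s *ᵥ v = s * v := fun v => funext (mulVec_diagonal s v)
  rw [← mulVec_mulVec, ← mulVec_mulVec, hdiag, hdiag]

theorem dotProduct_diagonal_mul_mul_diagonal_mulVec (s g : V → ℝ) (A : Matrix V V ℝ) :
    g ⬝ᵥ (diagonal s * A * diagonal s) *ᵥ g = (s * g) ⬝ᵥ A *ᵥ (s * g) := by
  rw [diagonal_mul_mul_diagonal_mulVec]
  simp only [dotProduct, Pi.mul_apply]
  exact Finset.sum_congr rfl fun x _ => by ring

omit [DecidableEq V] in
theorem nonneg_of_mulVec_eq_smul {M : Matrix V V ℝ} (hM : ∀ g, 0 ≤ g ⬝ᵥ M *ᵥ g) {μ : ℝ}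
    {g : V → ℝ} (hg : g ≠ 0) (hμ : M *ᵥ g = μ • g) : 0 ≤ μ := by
  have hpos : 0 < g ⬝ᵥ g := by simpa using dotProduct_self_star_pos_iff.mpr hg
  have := hM g
  rw [hμ, dotProduct_smul, smul_eq_mul] at this
  exact nonneg_of_mul_nonneg_left this hpos

end WeightedLaplacian

/-- Parent pointers of a spanning tree of `G` rooted at `root`; `depth` witnesses that
following parents always reaches the root. -/
structure RootedParent {V : Type*} (G : SimpleGraph V) where
  root : V
  parent : V → V
  depth : V → ℕ
  parent_root : parent root = root
  adj_parent : ∀ x, x ≠ root → G.Adj x (parent x)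
  depth_parent_lt : ∀ x, x ≠ root → depth (parent x) < depth x

theorem IsSignature.mul_self_eq_one {V : Type*} {G : SimpleGraph V} {σ : V → V → ℝ}
    (hσ : IsSignature G σ) {x y : V} (hxy : G.Adj x y) : σ x y * σ x y = 1 := by
  rcases hσ.2 x y hxy with h | h <;> rw [h] <;> norm_num

namespace SimpleGraph.Connected

variable {V : Type*} {G : SimpleGraph V}

theorem exists_adj_dist_lt (hG : G.Connected) {x r : V} (hx : x ≠ r) :
    ∃ y, G.Adj x y ∧ G.dist y r < G.dist x r := by
  obtain ⟨w, hw⟩ := hG.exists_walk_length_eq_dist x r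
  cases w with
  | nil => exact absurd rfl hx
  | cons hadj w' =>
    rw [SimpleGraph.Walk.length_cons] at hw
    exact ⟨_, hadj, (SimpleGraph.dist_le w').trans_lt (by omega)⟩

theorem nonempty_rootedParent (hG : G.Connected) : Nonempty (RootedParent G) := by
  obtain ⟨r⟩ := hG.nonempty
  have hparent : ∀ x, ∃ y, (x = r → y = r) ∧ (x ≠ r → G.Adj x y ∧ G.dist y r < G.dist x r) := by
    intro x
    by_cases hx : x = r
    · exact ⟨r, fun _ => rfl, absurd hx⟩
    · exact (hG.exists_adj_dist_lt hx).imp fun _ hy => ⟨fun h => absurd h hx, fun _ => hy⟩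
  choose p hp using hparent
  exact ⟨⟨r, p, (G.dist · r), (hp r).1 rfl, fun x hx => ((hp x).2 hx).1,
    fun x hx => ((hp x).2 hx).2⟩⟩

end SimpleGraph.Connected

namespace RootedParent

variable {V : Type*} {G : SimpleGraph V} (T : RootedParent G)

theorem induction_on {P : V → Prop} (root : P T.root)
    (parent : ∀ x, x ≠ T.root → P (T.parent x) → P x) (x : V) : P x := by
  induction hx : T.depth x using Nat.strong_induction_on generalizing x with
  | _ n ih =>
    by_cases hr : x = T.root
    · exact hr ▸ root
    · exact parent x hr (ih _ (hx ▸ T.depth_parent_lt x hr) _ rfl)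

theorem ne_root_of_adj_parent {x : V} (hx : G.Adj x (T.parent x)) : x ≠ T.root := by
  rintro rfl
  exact G.loopless.irrefl _ (T.parent_root ▸ hx)

def IsTreeEdge (x y : V) : Prop :=
  y = T.parent x ∨ x = T.parent y

open scoped Classical in
noncomputable def treeWeight (ε : ℝ) (x y : V) : ℝ :=
  if T.IsTreeEdge x y then 1 else ε

theorem treeWeight_pos {ε : ℝ} (hε : 0 < ε) (x y : V) : 0 < T.treeWeight ε x y := by
  unfold treeWeight
  split_ifs
  exacts [one_pos, hε]

theorem treeWeight_comm (ε : ℝ) (x y : V) : T.treeWeight ε x y = T.treeWeight ε y x := by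
  unfold treeWeight
  congr 1
  exact propext or_comm

section TreeEnergy

variable [Fintype V]

noncomputable def treeEnergy (h : V → ℝ) : ℝ :=
  ∑ x, (h x - h (T.parent x)) ^ 2

theorem treeEnergy_nonneg (h : V → ℝ) : 0 ≤ T.treeEnergy h :=
  Finset.sum_nonneg fun _ _ => sq_nonneg _

theorem sq_sub_parent_le_treeEnergy (h : V → ℝ) (x : V) :
    (h x - h (T.parent x)) ^ 2 ≤ T.treeEnergy h :=
  Finset.single_le_sum (f := fun x => (h x - h (T.parent x)) ^ 2)
    (fun _ _ => sq_nonneg _) (Finset.mem_univ x)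

theorem exists_sq_sub_root_le (x : V) :
    ∃ C, 0 ≤ C ∧ ∀ h, (h x - h T.root) ^ 2 ≤ C * T.treeEnergy h := by
  induction x using T.induction_on with
  | root => exact ⟨0, le_rfl, fun h => by simp⟩
  | parent x _ ih =>
    obtain ⟨C, hC, hbound⟩ := ih
    refine ⟨2 + 2 * C, by positivity, fun h => ?_⟩
    have hstep := T.sq_sub_parent_le_treeEnergy h x
    nlinarith [hbound h, sq_nonneg (h x - 2 * h (T.parent x) + h T.root)]

theorem exists_sq_sub_le_treeEnergy :
    ∃ C, 0 ≤ C ∧ ∀ h x y, (h x - h y) ^ 2 ≤ C * T.treeEnergy h := by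
  choose C hC hbound using T.exists_sq_sub_root_le
  have hle : ∀ x, C x ≤ ∑ y, C y := fun x =>
    Finset.single_le_sum (fun y _ => hC y) (Finset.mem_univ x)
  refine ⟨4 * ∑ y, C y, by linarith [hC T.root, hle T.root], fun h x y => ?_⟩
  have hE := T.treeEnergy_nonneg h
  nlinarith [hbound x h, hbound y h, mul_le_mul_of_nonneg_right (hle x) hE,
    mul_le_mul_of_nonneg_right (hle y) hE, sq_nonneg (h x + h y - 2 * h T.root)]

theorem eq_root_of_treeEnergy_eq_zero {h : V → ℝ} (hE : T.treeEnergy h = 0) (x : V) :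
    h x = h T.root := by
  obtain ⟨C, -, hbound⟩ := T.exists_sq_sub_le_treeEnergy
  have := hbound h x T.root
  rw [hE, mul_zero] at this
  nlinarith [sq_nonneg (h x - h T.root)]

end TreeEnergy

variable [DecidableEq V] (σ : V → V → ℝ)

/-- The switching function making every tree edge positive: the product of `σ` along the
tree path to the root. -/
noncomputable def switching (x : V) : ℝ :=
  if x = T.root then 1 else σ x (T.parent x) * switching (T.parent x)
termination_by T.depth x
decreasing_by exact T.depth_parent_lt x ‹_›

theorem switching_root : T.switching σ T.root = 1 := by
  rw [switching, if_pos rfl]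

theorem switching_of_ne_root {x : V} (hx : x ≠ T.root) :
    T.switching σ x = σ x (T.parent x) * T.switching σ (T.parent x) := by
  rw [switching, if_neg hx]

variable {σ}

theorem switching_mul_self (hσ : IsSignature G σ) (x : V) :
    T.switching σ x * T.switching σ x = 1 := by
  induction x using T.induction_on with
  | root => rw [switching_root, one_mul]
  | parent x hx ih =>
    rw [switching_of_ne_root T σ hx]
    linear_combination (σ x (T.parent x) * σ x (T.parent x)) * ih +
      hσ.mul_self_eq_one (T.adj_parent x hx)

theorem switching_ne_zero (hσ : IsSignature G σ) (x : V) : T.switching σ x ≠ 0 :=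
  left_ne_zero_of_mul_eq_one (T.switching_mul_self hσ x)

theorem switching_mul_mul_switching_parent (hσ : IsSignature G σ) {x : V} (hx : x ≠ T.root) :
    T.switching σ x * σ x (T.parent x) * T.switching σ (T.parent x) = 1 := by
  rw [switching_of_ne_root T σ hx]
  linear_combination (σ x (T.parent x) * σ x (T.parent x)) * T.switching_mul_self hσ (T.parent x) +
    hσ.mul_self_eq_one (T.adj_parent x hx)

theorem switching_mul_mul_switching_of_isTreeEdge (hσ : IsSignature G σ) {x y : V}
    (hxy : G.Adj x y) (ht : T.IsTreeEdge x y) :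
    T.switching σ x * σ x y * T.switching σ y = 1 := by
  rcases ht with rfl | rfl
  · exact T.switching_mul_mul_switching_parent hσ (T.ne_root_of_adj_parent hxy)
  · rw [hσ.1, ← T.switching_mul_mul_switching_parent hσ (T.ne_root_of_adj_parent hxy.symm)]
    ring

theorem posSubgraph_switching_connected (hσ : IsSignature G σ) :
    (posSubgraph G σ (T.switching σ)).Connected := by
  have hroot : ∀ x, (posSubgraph G σ (T.switching σ)).Reachable x T.root := by
    intro x
    induction x using T.induction_on with
    | root => rfl
    | parent x hx ih =>
      have hpos := T.switching_mul_mul_switching_parent hσ hx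
      have hadj : (posSubgraph G σ (T.switching σ)).Adj x (T.parent x) := by
        refine ⟨T.adj_parent x hx, ?_, ?_⟩
        · rw [hpos]; exact one_pos
        · rw [hσ.1]; linarith
      exact hadj.reachable.trans ih
  have : Nonempty V := ⟨T.root⟩
  exact .mk fun x y => (hroot x).trans (hroot y).symm

variable (σ) (ε : ℝ)

open scoped Classical in
noncomputable def switchedWeight : Matrix V V ℝ :=
  of fun x y =>
    if G.Adj x y then T.treeWeight ε x y * (T.switching σ x * σ x y * T.switching σ y) else 0

variable {σ ε}

theorem switchedWeight_isSymm (hσ : IsSignature G σ) : (T.switchedWeight σ ε).IsSymm := by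
  refine IsSymm.ext_iff.mpr fun x y => ?_
  rw [switchedWeight, of_apply, of_apply, G.adj_comm y x, T.treeWeight_comm ε y x, hσ.1 y x]
  congr 2
  ring

theorem switchedWeight_parent (hσ : IsSignature G σ) {x : V} (hx : x ≠ T.root) :
    T.switchedWeight σ ε x (T.parent x) = 1 := by
  rw [switchedWeight, of_apply, if_pos (T.adj_parent x hx), treeWeight, if_pos (.inl rfl),
    one_mul, T.switching_mul_mul_switching_parent hσ hx]

theorem neg_le_switchedWeight (hσ : IsSignature G σ) (hε : 0 < ε) (x y : V) :
    -ε ≤ T.switchedWeight σ ε x y := by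
  rw [switchedWeight, of_apply]
  split_ifs with hxy
  · by_cases ht : T.IsTreeEdge x y
    · rw [T.switching_mul_mul_switching_of_isTreeEdge hσ hxy ht, mul_one]
      linarith [T.treeWeight_pos hε x y]
    · have hsign : T.switching σ x * σ x y * T.switching σ y = 1 ∨
          T.switching σ x * σ x y * T.switching σ y = -1 := mul_self_eq_one_iff.mp <| by
        linear_combination (σ x y * σ x y * T.switching σ y * T.switching σ y) *
          T.switching_mul_self hσ x + (σ x y * σ x y) * T.switching_mul_self hσ y +
          hσ.mul_self_eq_one hxy
      rw [treeWeight, if_neg ht]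
      rcases hsign with h | h <;> rw [h] <;> linarith
  · exact neg_nonpos.mpr hε.le

theorem ite_parent_sub_le_switchedWeight_mul (hσ : IsSignature G σ) (hε : 0 < ε) (h : V → ℝ)
    (x y : V) :
    (if y = T.parent x then (h x - h y) ^ 2 else 0) - ε * (h x - h y) ^ 2 ≤
      T.switchedWeight σ ε x y * (h x - h y) ^ 2 := by
  have hsq := sq_nonneg (h x - h y)
  split_ifs with hy
  · by_cases hx : x = T.root
    · simp [hy, hx, T.parent_root]
    · rw [hy, T.switchedWeight_parent hσ hx]
      nlinarith
  · nlinarith [T.neg_le_switchedWeight hσ hε x y]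

variable [Fintype V] (σ ε)

/-- Off the diagonal this is `-(treeWeight * σ)`; after switching by `T.switching σ` it is the
Laplacian of a weighted graph whose tree edges have weight `1` and whose other edges have
weight `±ε`. -/
noncomputable def switchedLaplacian : Matrix V V ℝ :=
  diagonal (T.switching σ) * weightedLaplacian (T.switchedWeight σ ε) * diagonal (T.switching σ)

variable {σ ε}

theorem switchedLaplacian_isSymm (hσ : IsSignature G σ) : (T.switchedLaplacian σ ε).IsSymm := by
  refine IsSymm.ext_iff.mpr fun x y => ?_
  simp only [switchedLaplacian, diagonal_mul_mul_diagonal_apply,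
    (weightedLaplacian_isSymm (T.switchedWeight_isSymm hσ)).apply x y]
  ring

theorem switchedLaplacian_apply_of_ne {x y : V} (hxy : x ≠ y) :
    T.switchedLaplacian σ ε x y =
      -(T.switching σ x * T.switchedWeight σ ε x y * T.switching σ y) := by
  rw [switchedLaplacian, diagonal_mul_mul_diagonal_apply, weightedLaplacian, Matrix.sub_apply,
    diagonal_apply_ne _ hxy]
  ring

theorem switchedLaplacian_apply_of_adj (hσ : IsSignature G σ) {x y : V} (hxy : G.Adj x y) :
    T.switchedLaplacian σ ε x y = -(T.treeWeight ε x y * σ x y) := by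
  rw [T.switchedLaplacian_apply_of_ne hxy.ne, switchedWeight, of_apply, if_pos hxy]
  linear_combination (-(T.treeWeight ε x y * σ x y) * T.switching σ y * T.switching σ y) *
    T.switching_mul_self hσ x - T.treeWeight ε x y * σ x y * T.switching_mul_self hσ y

theorem switchedLaplacian_apply_of_not_adj {x y : V} (hne : x ≠ y) (hxy : ¬G.Adj x y) :
    T.switchedLaplacian σ ε x y = 0 := by
  rw [T.switchedLaplacian_apply_of_ne hne, switchedWeight, of_apply, if_neg hxy]
  ring

theorem compatible_switchedLaplacian (hσ : IsSignature G σ) (hε : 0 < ε) :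
    Compatible (T.switchedLaplacian σ ε) G σ := by
  refine ⟨fun x y => ⟨fun hxy => ⟨hxy.ne, ?_⟩, fun ⟨hne, hM⟩ => ?_⟩, fun x y hxy => ?_⟩
  · rw [T.switchedLaplacian_apply_of_adj hσ hxy, neg_ne_zero]
    exact mul_ne_zero (T.treeWeight_pos hε x y).ne'
      (left_ne_zero_of_mul_eq_one (hσ.mul_self_eq_one hxy))
  · by_contra hxy
    exact hM (T.switchedLaplacian_apply_of_not_adj hne hxy)
  · have hw := T.treeWeight_pos hε x y
    rw [T.switchedLaplacian_apply_of_adj hσ hxy]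
    rcases hσ.2 x y hxy with h | h <;> simp [h, abs_of_pos hw, hw.ne']

theorem switchedLaplacian_mulVec_switching (hσ : IsSignature G σ) :
    T.switchedLaplacian σ ε *ᵥ T.switching σ = 0 := by
  have hs : T.switching σ * T.switching σ = 1 := funext (T.switching_mul_self hσ)
  rw [switchedLaplacian, diagonal_mul_mul_diagonal_mulVec, hs, weightedLaplacian_mulVec_one,
    mul_zero]

theorem two_mul_dotProduct_switchedLaplacian_mulVec (hσ : IsSignature G σ) (g : V → ℝ) :
    2 * (g ⬝ᵥ T.switchedLaplacian σ ε *ᵥ g) =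
      ∑ x, ∑ y, T.switchedWeight σ ε x y * ((T.switching σ * g) x - (T.switching σ * g) y) ^ 2 := by
  rw [switchedLaplacian, dotProduct_diagonal_mul_mul_diagonal_mulVec,
    two_mul_dotProduct_weightedLaplacian_mulVec (T.switchedWeight_isSymm hσ)]

/-- Here `ε = 1 / (n² C + 1)`, where `C` bounds every `(h x - h y)²` by the tree energy. -/
theorem exists_treeEnergy_le (hσ : IsSignature G σ) :
    ∃ ε > 0, ∀ h : V → ℝ,
      ε * T.treeEnergy h ≤ ∑ x, ∑ y, T.switchedWeight σ ε x y * (h x - h y) ^ 2 := by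
  obtain ⟨C, hC, hbound⟩ := T.exists_sq_sub_le_treeEnergy
  set K : ℝ := Fintype.card V ^ 2 * C
  have hK : 0 ≤ K := by positivity
  refine ⟨(K + 1)⁻¹, by positivity, fun h => ?_⟩
  set ε : ℝ := (K + 1)⁻¹
  have hεK : ε * (K + 1) = 1 := inv_mul_cancel₀ (by positivity)
  have hE := T.treeEnergy_nonneg h
  have hparent : ∑ x, ∑ y, (if y = T.parent x then (h x - h y) ^ 2 else 0) = T.treeEnergy h := by
    simp [treeEnergy]
  have hrest : ∑ x, ∑ y, ε * (h x - h y) ^ 2 ≤ ε * K * T.treeEnergy h := by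
    calc ∑ x, ∑ y, ε * (h x - h y) ^ 2 ≤ ∑ _x : V, ∑ _y : V, ε * (C * T.treeEnergy h) :=
          Finset.sum_le_sum fun x _ => Finset.sum_le_sum fun y _ =>
            mul_le_mul_of_nonneg_left (hbound h x y) (by positivity)
      _ = ε * K * T.treeEnergy h := by simp [K]; ring
  have hsum := Finset.sum_le_sum fun x (_ : x ∈ Finset.univ) => Finset.sum_le_sum
    fun y (_ : y ∈ Finset.univ) => T.ite_parent_sub_le_switchedWeight_mul hσ (ε := ε)
      (by positivity) h x y
  simp only [Finset.sum_sub_distrib, hparent] at hsum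
  nlinarith

theorem exists_eq_smul_switching (hσ : IsSignature G σ) {g : V → ℝ}
    (hE : T.treeEnergy (T.switching σ * g) = 0) : ∃ c : ℝ, g = c • T.switching σ := by
  refine ⟨(T.switching σ * g) T.root, funext fun x => ?_⟩
  rw [Pi.smul_apply, smul_eq_mul, ← T.eq_root_of_treeEnergy_eq_zero hE x, Pi.mul_apply]
  linear_combination -g x * T.switching_mul_self hσ x

end RootedParent

/-- every connected signed graph has a compatible symmetric matrix whose
smallest eigenvalue is simple with a nowhere-vanishing eigenvector, so 𝔖(f₁) = 1. -/
theorem stmt_8 {V : Type*} [Fintype V] [DecidableEq V] (G : SimpleGraph V)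
    (σ : V → V → ℝ) (hσ : IsSignature G σ) (hconn : G.Connected) :
    ∃ M : Matrix V V ℝ, M.IsSymm ∧ Compatible M G σ ∧
      ∃ (μ : ℝ) (f : V → ℝ), f ≠ 0 ∧ M.mulVec f = μ • f ∧
        (∀ (μ' : ℝ) (g : V → ℝ), g ≠ 0 → M.mulVec g = μ' • g → μ ≤ μ') ∧
        (∀ g : V → ℝ, M.mulVec g = μ • g → ∃ c : ℝ, g = c • f) ∧
        (∀ x, f x ≠ 0) ∧ numStrong G σ f = 1 := by
  obtain ⟨T⟩ := hconn.nonempty_rootedParent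
  obtain ⟨ε, hε, hdominant⟩ := T.exists_treeEnergy_le hσ
  set s := T.switching σ
  set M := T.switchedLaplacian σ ε
  have hform : ∀ g, ε * T.treeEnergy (s * g) ≤ 2 * (g ⬝ᵥ M *ᵥ g) := fun g =>
    (hdominant (s * g)).trans_eq (T.two_mul_dotProduct_switchedLaplacian_mulVec hσ g).symm
  have hpsd : ∀ g, 0 ≤ g ⬝ᵥ M *ᵥ g := fun g => by
    nlinarith [hform g, T.treeEnergy_nonneg (s * g)]
  have hs : ∀ x, s x ≠ 0 := T.switching_ne_zero hσ
  refine ⟨M, T.switchedLaplacian_isSymm hσ, T.compatible_switchedLaplacian hσ hε, 0, s,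
    fun h => hs T.root (congrFun h _), ?_, fun _ _ hg hμ => nonneg_of_mulVec_eq_smul hpsd hg hμ,
    fun g hg => ?_, hs, numStrong_eq_one_of_connected hs (T.posSubgraph_switching_connected hσ)⟩
  · rw [zero_smul]
    exact T.switchedLaplacian_mulVec_switching hσ
  · have hzero : g ⬝ᵥ M *ᵥ g = 0 := by rw [hg, zero_smul, dotProduct_zero]
    refine T.exists_eq_smul_switching hσ (le_antisymm ?_ (T.treeEnergy_nonneg _))
    nlinarith [hform g]
end

section
/- Let M be an n×n real symmetric matrix with induced signed graph Γ = (G,σ), and let λ_k be the k-th eigenvalue of M (eigenvalues listed in nondecreasing order with multiplicity). If f_k is an eigenvector with Mf_k = λ_k f_k having minimal support, then the number of strong nodal domains satisfies 𝔖(f_k) ≤ k. -/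
open Matrix Polynomial

/-!
Suppose `f` had more than `k + 1` strong nodal domains `D`. The restrictions `f|_D` are pairwise
orthogonal and sum to `f`, and two distinct domains are never joined by an S-walk step, so every
cross term `⟪f|_D, M f|_D'⟫` is nonnegative. Consequently each combination `g = ∑ c_D f|_D`
satisfies `⟪g, M g⟫ ≤ μ k ‖g‖²`. Since at most `k` eigenvalues lie below `μ k`, we can choose
`c ≠ 0` vanishing on one domain `D₀` with `g` orthogonal to the corresponding eigenvectors; then
`⟪g, M g⟫ ≥ μ k ‖g‖²` as well, equality in the Rayleigh quotient makes `g` an eigenvector for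
`μ k`, and its support is strictly contained in that of `f`.
-/

open Function

namespace Matrix.IsHermitian

variable {ι : Type*} [Fintype ι] [DecidableEq ι] {A : Matrix ι ι ℝ} (hA : A.IsHermitian)

lemma sum_dotProduct_smul_eigenvectorBasis (g : ι → ℝ) :
    ∑ i, (⇑(hA.eigenvectorBasis i) ⬝ᵥ g) • ⇑(hA.eigenvectorBasis i) = g := by
  have := congrArg WithLp.ofLp (hA.eigenvectorBasis.sum_repr' (WithLp.toLp 2 g))
  simpa [EuclideanSpace.inner_eq_star_dotProduct, dotProduct_comm] using this

lemma mulVec_eq_sum (g : ι → ℝ) :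
    A *ᵥ g = ∑ i, (hA.eigenvalues i * (⇑(hA.eigenvectorBasis i) ⬝ᵥ g)) •
      ⇑(hA.eigenvectorBasis i) := by
  conv_lhs => rw [← hA.sum_dotProduct_smul_eigenvectorBasis g]
  simp [mulVec_sum, mulVec_smul, hA.mulVec_eigenvectorBasis, smul_smul, mul_comm]

lemma dotProduct_mulVec_sub_eq_sum (g : ι → ℝ) (c : ℝ) :
    g ⬝ᵥ (A *ᵥ g) - c * (g ⬝ᵥ g) =
      ∑ i, (hA.eigenvalues i - c) * (⇑(hA.eigenvectorBasis i) ⬝ᵥ g) ^ 2 := by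
  conv_lhs =>
    rw [hA.mulVec_eq_sum g]
    enter [2, 2, 2]
    rw [← hA.sum_dotProduct_smul_eigenvectorBasis g]
  simp only [dotProduct_sum, dotProduct_smul, smul_eq_mul, Finset.mul_sum,
    ← Finset.sum_sub_distrib]
  refine Finset.sum_congr rfl fun i _ => ?_
  rw [dotProduct_comm]; ring

lemma mulVec_eq_smul_of_dotProduct_mulVec_le {g : ι → ℝ} {c : ℝ}
    (horth : ∀ i, hA.eigenvalues i < c → ⇑(hA.eigenvectorBasis i) ⬝ᵥ g = 0)
    (hle : g ⬝ᵥ (A *ᵥ g) ≤ c * (g ⬝ᵥ g)) : A *ᵥ g = c • g := by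
  have hterm_nonneg : ∀ i, 0 ≤ (hA.eigenvalues i - c) * (⇑(hA.eigenvectorBasis i) ⬝ᵥ g) ^ 2 := by
    intro i
    rcases lt_or_ge (hA.eigenvalues i) c with hi | hi
    · simp [horth i hi]
    · exact mul_nonneg (sub_nonneg.mpr hi) (sq_nonneg _)
  have hsum : ∑ i, (hA.eigenvalues i - c) * (⇑(hA.eigenvectorBasis i) ⬝ᵥ g) ^ 2 = 0 :=
    le_antisymm (by rw [← hA.dotProduct_mulVec_sub_eq_sum]; linarith)
      (Finset.sum_nonneg fun i _ => hterm_nonneg i)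
  have hcoeff : ∀ i, hA.eigenvalues i * (⇑(hA.eigenvectorBasis i) ⬝ᵥ g) =
      c * (⇑(hA.eigenvectorBasis i) ⬝ᵥ g) := by
    intro i
    have hi := (Finset.sum_eq_zero_iff_of_nonneg fun i _ => hterm_nonneg i).mp hsum i
      (Finset.mem_univ i)
    rcases mul_eq_zero.mp hi with h | h
    · rw [sub_eq_zero.mp h]
    · rw [pow_eq_zero_iff two_ne_zero |>.mp h, mul_zero, mul_zero]
  conv_rhs => rw [← hA.sum_dotProduct_smul_eigenvectorBasis g]
  simp only [hA.mulVec_eq_sum, hcoeff, Finset.smul_sum, smul_smul]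

lemma map_eigenvalues_eq_of_charpoly_eq {μ : ι → ℝ} (hchar : A.charpoly = ∏ i, (X - C (μ i))) :
    Finset.univ.val.map hA.eigenvalues = Finset.univ.val.map μ := by
  have hroots := hA.roots_charpoly_eq_eigenvalues
  rw [hchar, roots_prod _ _ (by simp [Finset.prod_ne_zero_iff, X_sub_C_ne_zero])] at hroots
  simpa using hroots.symm

end Matrix.IsHermitian

lemma Monotone.card_lt_apply_le_of_map_eq {ι : Type*} [Fintype ι] {n : ℕ} {μ : Fin n → ℝ}
    (hmono : Monotone μ) {e : ι → ℝ} (he : Finset.univ.val.map e = Finset.univ.val.map μ)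
    (k : Fin n) :
    Fintype.card {i // e i < μ k} ≤ k := by
  classical
  calc Fintype.card {i // e i < μ k}
      = (Finset.univ.val.map e).countP (· < μ k) := by
        rw [Fintype.card_subtype, Multiset.countP_map]; rfl
    _ = (Finset.univ.filter fun i => μ i < μ k).card := by
        rw [he, Multiset.countP_map]; rfl
    _ ≤ (Finset.Iio k).card :=
        Finset.card_le_card fun i hi => Finset.mem_Iio.mpr <|
          hmono.reflect_lt (Finset.mem_filter.mp hi).2
    _ = k := Fin.card_Iio k

lemma Matrix.exists_mulVec_eq_zero_of_card_lt {K m n : Type*} [Field K] [Fintype m] [Fintype n]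
    (A : Matrix m n K) (h : Fintype.card m < Fintype.card n) : ∃ v ≠ 0, A *ᵥ v = 0 := by
  obtain ⟨v, hv, hne⟩ := Submodule.exists_mem_ne_zero_of_ne_bot
    (A.mulVecLin.ker_ne_bot_of_finrank_lt (by simpa using h))
  exact ⟨v, hne, hv⟩

lemma exists_ne_zero_apply_eq_zero_and_dotProduct_eq_zero {K ι κ : Type*} [Field K]
    [Fintype ι] [Fintype κ] [DecidableEq ι] (w : κ → ι → K) (i₀ : ι)
    (h : Fintype.card κ + 1 < Fintype.card ι) :
    ∃ c ≠ 0, c i₀ = 0 ∧ ∀ j, w j ⬝ᵥ c = 0 := by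
  obtain ⟨c, hc, hw⟩ := (Matrix.of fun j : Option κ => j.elim (Pi.single i₀ 1) w)
    |>.exists_mulVec_eq_zero_of_card_lt (by simpa using h)
  refine ⟨c, hc, ?_, fun j => by simpa [mulVec] using congrFun hw (some j)⟩
  simpa [mulVec, single_one_dotProduct] using congrFun hw none

section Indicator

variable {ι V : Type*} {s : ι → Set V} (hs : Pairwise (Disjoint on s)) {f : V → ℝ}
include hs

lemma sum_smul_indicator_apply_of_mem [Fintype ι] (c : ι → ℝ) {i : ι} {x : V}
    (hx : x ∈ s i) :
    (∑ j, c j • (s j).indicator f) x = c i * f x := by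
  rw [Finset.sum_apply, Finset.sum_eq_single i]
  · simp [hx]
  · intro j _ hji
    simp [Set.indicator_of_notMem ((hs hji).notMem_of_mem_right hx)]
  · simp

lemma sum_indicator_eq [Fintype ι] (hcover : ∀ x, f x ≠ 0 → ∃ i, x ∈ s i) :
    ∑ i, (s i).indicator f = f := by
  ext x
  by_cases hx : f x = 0
  · rw [Finset.sum_apply, hx]
    exact Finset.sum_eq_zero fun i _ => Set.indicator_apply_eq_zero.mpr fun _ => hx
  · obtain ⟨i, hi⟩ := hcover x hx
    simpa using sum_smul_indicator_apply_of_mem hs 1 hi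

lemma indicator_dotProduct_indicator_eq_zero [Fintype V] {i j : ι} (hij : i ≠ j) :
    (s i).indicator f ⬝ᵥ (s j).indicator f = 0 := by
  refine Finset.sum_eq_zero fun x _ => ?_
  by_cases hx : x ∈ s i
  · simp [Set.indicator_of_notMem ((hs hij).notMem_of_mem_left hx)]
  · simp [Set.indicator_of_notMem hx]

end Indicator

lemma sum_smul_dotProduct_sum_smul {ι V : Type*} [Fintype ι] [Fintype V] (a : ι → ℝ)
    (u v : ι → V → ℝ) :
    (∑ i, a i • u i) ⬝ᵥ (∑ j, a j • v j) = ∑ i, ∑ j, a i * a j * (u i ⬝ᵥ v j) := by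
  simp_rw [sum_dotProduct, dotProduct_sum, smul_dotProduct, dotProduct_smul, smul_eq_mul,
    mul_assoc]

lemma dotProduct_mulVec_le_of_pairwise_nonneg {ι V : Type*} [Fintype ι] [Fintype V]
    {A : Matrix V V ℝ} (hA : A.IsSymm) {F : ι → V → ℝ}
    (horth : Pairwise fun i j => F i ⬝ᵥ F j = 0)
    (hcross : Pairwise fun i j => 0 ≤ F i ⬝ᵥ (A *ᵥ F j))
    {c : ℝ} (heig : A *ᵥ ∑ i, F i = c • ∑ i, F i) (a : ι → ℝ) :
    (∑ i, a i • F i) ⬝ᵥ (A *ᵥ ∑ i, a i • F i) ≤ c * ((∑ i, a i • F i) ⬝ᵥ ∑ i, a i • F i) := by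
  set B : ι → ι → ℝ := fun i j => F i ⬝ᵥ (A *ᵥ F j)
  have hBsymm : ∀ i j, B i j = B j i := fun i j => by
    simp only [B, dotProduct_mulVec, ← mulVec_transpose, hA.eq, dotProduct_comm (A *ᵥ F i)]
  have hrow : ∀ i, c * (F i ⬝ᵥ F i) = ∑ j, B i j := fun i => by
    have := congrArg (F i ⬝ᵥ ·) heig
    simp only [mulVec_sum, dotProduct_sum, dotProduct_smul, smul_eq_mul] at this
    rw [this, Finset.sum_eq_single i (fun j _ hji => horth hji.symm) (by simp)]
  have hquad : (∑ i, a i • F i) ⬝ᵥ (A *ᵥ ∑ i, a i • F i) = ∑ i, ∑ j, a i * a j * B i j := by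
    simp only [mulVec_sum, mulVec_smul, sum_smul_dotProduct_sum_smul, B]
  have hnorm : c * ((∑ i, a i • F i) ⬝ᵥ ∑ i, a i • F i) = ∑ i, ∑ j, a i ^ 2 * B i j := by
    simp only [sum_smul_dotProduct_sum_smul, Finset.mul_sum]
    refine Finset.sum_congr rfl fun i _ => ?_
    rw [Finset.sum_eq_single i (fun j _ hji => by rw [horth hji.symm]; ring) (by simp),
      ← Finset.mul_sum, ← hrow]
    ring
  have hswap : ∑ i, ∑ j, a j ^ 2 * B i j = ∑ i, ∑ j, a i ^ 2 * B i j := by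
    rw [Finset.sum_comm]; simp only [hBsymm]
  have hdiff : 2 * (c * ((∑ i, a i • F i) ⬝ᵥ ∑ i, a i • F i)
      - (∑ i, a i • F i) ⬝ᵥ (A *ᵥ ∑ i, a i • F i)) = ∑ i, ∑ j, (a i - a j) ^ 2 * B i j := by
    rw [hnorm, hquad, two_mul]
    nth_rw 2 [← hswap]
    simp only [← Finset.sum_add_distrib, ← Finset.sum_sub_distrib]
    exact Finset.sum_congr rfl fun i _ => Finset.sum_congr rfl fun j _ => by ring
  have : 0 ≤ ∑ i, ∑ j, (a i - a j) ^ 2 * B i j :=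
    Finset.sum_nonneg fun i _ => Finset.sum_nonneg fun j _ => by
      rcases eq_or_ne i j with rfl | hij
      · simp
      · exact mul_nonneg (sq_nonneg _) (hcross hij)
  linarith

theorem card_le_succ_of_minimal_support {n : ℕ} {A : Matrix (Fin n) (Fin n) ℝ} (hA : A.IsSymm)
    {μ : Fin n → ℝ} (hmono : Monotone μ) (hchar : A.charpoly = ∏ i, (X - C (μ i)))
    {k : Fin n} {f : Fin n → ℝ} (heig : A *ᵥ f = μ k • f)
    (hmin : ∀ g : Fin n → ℝ, g ≠ 0 → A *ᵥ g = μ k • g →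
      {i | g i ≠ 0} ⊆ {i | f i ≠ 0} → {i | g i ≠ 0} = {i | f i ≠ 0})
    {ι : Type*} [Fintype ι] {s : ι → Set (Fin n)} (hs : Pairwise (Disjoint on s))
    (hne : ∀ i, ∃ x ∈ s i, f x ≠ 0) (hcover : ∀ x, f x ≠ 0 → ∃ i, x ∈ s i)
    (hcross : Pairwise fun i j => 0 ≤ (s i).indicator f ⬝ᵥ (A *ᵥ (s j).indicator f)) :
    Fintype.card ι ≤ k + 1 := by
  classical
  by_contra! hcard
  have hH : A.IsHermitian := isHermitian_iff_isSymm.mpr hA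
  obtain ⟨i₀⟩ : Nonempty ι := Fintype.card_pos_iff.mp (by omega)
  have hbelow := hmono.card_lt_apply_le_of_map_eq (hH.map_eigenvalues_eq_of_charpoly_eq hchar) k
  obtain ⟨c, hc, hci₀, hcorth⟩ := exists_ne_zero_apply_eq_zero_and_dotProduct_eq_zero
    (fun (j : {j // hH.eigenvalues j < μ k}) i => ⇑(hH.eigenvectorBasis j) ⬝ᵥ (s i).indicator f)
    i₀ (by omega)
  set g := ∑ i, c i • (s i).indicator f
  have hgeig : A *ᵥ g = μ k • g := by
    refine hH.mulVec_eq_smul_of_dotProduct_mulVec_le (fun j hj => ?_) ?_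
    · have h := hcorth ⟨j, hj⟩
      rw [dotProduct_comm, dotProduct] at h
      simpa [g, dotProduct_sum] using h
    · refine dotProduct_mulVec_le_of_pairwise_nonneg hA
        (fun i j hij => indicator_dotProduct_indicator_eq_zero hs hij) hcross ?_ c
      rwa [sum_indicator_eq hs hcover]
  have hgx : ∀ i, ∀ x ∈ s i, g x = c i * f x := fun i x hx =>
    sum_smul_indicator_apply_of_mem hs c hx
  have hsupp : {x | g x ≠ 0} ⊆ {x | f x ≠ 0} := fun x hx hfx => hx <| by
    simp [g, Finset.sum_apply, Set.indicator_apply, hfx]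
  have hg0 : g ≠ 0 := by
    obtain ⟨i, hi⟩ := Function.ne_iff.mp hc
    obtain ⟨x, hx, hfx⟩ := hne i
    exact fun h => mul_ne_zero hi hfx (by rw [← hgx i x hx, h, Pi.zero_apply])
  obtain ⟨x₀, hx₀, hfx₀⟩ := hne i₀
  have hgx₀ : x₀ ∈ {x | g x ≠ 0} := (hmin g hg0 hgeig hsupp).symm ▸ hfx₀
  exact hgx₀ (by rw [hgx i₀ x₀ hx₀, hci₀, zero_mul])

section StrongNodalDomains

variable {V : Type*} {G : SimpleGraph V} {σ : V → V → ℝ} {f : V → ℝ}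

lemma eq_or_sConn_iff_reflTransGen {x w : V} :
    x = w ∨ SConn G σ f x w ↔ Relation.ReflTransGen (SWalkStep G σ f) x w := by
  constructor
  · rintro (rfl | ⟨l, hlen, hchain, hhead, hlast⟩)
    · exact .refl
    · have hl : l ≠ [] := List.ne_nil_of_length_pos (by omega)
      rw [List.head?_eq_some_head hl, Option.some_inj] at hhead
      rw [List.getLast?_eq_some_getLast hl, Option.some_inj] at hlast
      exact hhead ▸ hlast ▸ List.relationReflTransGen_of_exists_isChain l hchain hl
  · intro h
    obtain ⟨_ | ⟨a, l⟩, hchain, hlast⟩ := List.exists_isChain_cons_of_relationReflTransGen h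
    · exact .inl hlast
    · exact .inr ⟨x :: a :: l, by simp, hchain, rfl,
        by rw [List.getLast?_eq_some_getLast (by simp), hlast]⟩

lemma mem_strongClass_iff {x w : V} :
    x ∈ strongClass G σ f w ↔ f x ≠ 0 ∧ Relation.ReflTransGen (SWalkStep G σ f) x w :=
  and_congr_right' eq_or_sConn_iff_reflTransGen

lemma mem_strongClass_self {w : V} (hw : f w ≠ 0) : w ∈ strongClass G σ f w :=
  ⟨hw, .inl rfl⟩

lemma strongClass_mem_strongDomains {w : V} (hw : f w ≠ 0) :
    strongClass G σ f w ∈ strongDomains G σ f :=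
  ⟨w, hw, rfl⟩

lemma exists_mem_ne_zero_of_mem_strongDomains {D : Set V} (hD : D ∈ strongDomains G σ f) :
    ∃ x ∈ D, f x ≠ 0 := by
  obtain ⟨w, hw, rfl⟩ := hD
  exact ⟨w, mem_strongClass_self hw, hw⟩

lemma ne_zero_of_mem_strongDomains {D : Set V} (hD : D ∈ strongDomains G σ f) {x : V}
    (hx : x ∈ D) : f x ≠ 0 := by
  obtain ⟨w, -, rfl⟩ := hD
  exact hx.1

lemma Compatible.mul_mul_nonneg_of_not_sWalkStep {M : Matrix V V ℝ} (hcompat : Compatible M G σ)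
    {x y : V} (hxy : x ≠ y) (hstep : ¬ SWalkStep G σ f x y) : 0 ≤ f x * M x y * f y := by
  by_cases hM : M x y = 0
  · simp [hM]
  have hadj : G.Adj x y := (hcompat.1 x y).mpr ⟨hxy, hM⟩
  have hsign : f x * σ x y * f y ≤ 0 := not_lt.mp fun h => hstep ⟨hadj, h⟩
  have hMσ : M x y = -σ x y * |M x y| := by
    rw [hcompat.2 x y hadj]
    field_simp [abs_ne_zero.mpr hM]
  rw [hMσ]
  nlinarith [abs_nonneg (M x y)]

variable (hσ : ∀ x y, σ x y = σ y x)
include hσ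

lemma sWalkStep_symm : Std.Symm (SWalkStep G σ f) where
  symm x y h := ⟨h.1.symm, by rw [hσ]; linarith [h.2]⟩

lemma eq_strongClass_of_mem {D : Set V} (hD : D ∈ strongDomains G σ f) {x : V} (hx : x ∈ D) :
    D = strongClass G σ f x := by
  obtain ⟨w, -, rfl⟩ := hD
  have hxw := (mem_strongClass_iff.mp hx).2
  have := sWalkStep_symm (G := G) (f := f) hσ
  have hwx := symm_of (Relation.ReflTransGen _) hxw
  ext y
  simp only [mem_strongClass_iff]
  exact and_congr_right fun _ => ⟨fun hyw => hyw.trans hwx, fun hyx => hyx.trans hxw⟩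

lemma strongDomains_pairwise_disjoint :
    Pairwise (Disjoint on fun D : strongDomains G σ f => (D : Set V)) := by
  intro D D' hne
  refine Set.disjoint_left.mpr fun x hx hx' => hne (Subtype.ext ?_)
  rw [eq_strongClass_of_mem hσ D.2 hx, eq_strongClass_of_mem hσ D'.2 hx']

lemma not_sWalkStep_of_mem_strongDomains {D D' : Set V} (hD : D ∈ strongDomains G σ f)
    (hD' : D' ∈ strongDomains G σ f) (hne : D ≠ D') {x y : V} (hx : x ∈ D) (hy : y ∈ D') :
    ¬ SWalkStep G σ f x y := by
  intro hxy
  apply hne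
  rw [eq_strongClass_of_mem hσ hD hx, eq_strongClass_of_mem hσ hD' hy]
  have hy' := strongClass_mem_strongDomains (G := G) (σ := σ) (ne_zero_of_mem_strongDomains hD' hy)
  exact (eq_strongClass_of_mem hσ hy'
    (mem_strongClass_iff.mpr ⟨ne_zero_of_mem_strongDomains hD hx, .single hxy⟩)).symm

lemma indicator_dotProduct_mulVec_indicator_nonneg [Fintype V] {M : Matrix V V ℝ}
    (hcompat : Compatible M G σ) {D D' : Set V} (hD : D ∈ strongDomains G σ f)
    (hD' : D' ∈ strongDomains G σ f) (hne : D ≠ D') :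
    0 ≤ D.indicator f ⬝ᵥ (M *ᵥ D'.indicator f) := by
  simp only [dotProduct, mulVec, Finset.mul_sum]
  refine Finset.sum_nonneg fun x _ => Finset.sum_nonneg fun y _ => ?_
  by_cases hx : x ∈ D
  · by_cases hy : y ∈ D'
    · have hxy : x ≠ y := by
        rintro rfl
        exact hne ((eq_strongClass_of_mem hσ hD hx).trans (eq_strongClass_of_mem hσ hD' hy).symm)
      rw [Set.indicator_of_mem hx, Set.indicator_of_mem hy, ← mul_assoc]
      exact hcompat.mul_mul_nonneg_of_not_sWalkStep hxy
        (not_sWalkStep_of_mem_strongDomains hσ hD hD' hne hx hy)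
    · simp [Set.indicator_of_notMem hy]
  · simp [Set.indicator_of_notMem hx]

end StrongNodalDomains

/-- `k` is 0-based: `μ k` is the paper's `λ_{k+1}`. -/
theorem stmt_11_general (n : ℕ) (M : Matrix (Fin n) (Fin n) ℝ) (hM : M.IsSymm)
    (G : SimpleGraph (Fin n)) (σ : Fin n → Fin n → ℝ)
    (hσ : IsSignature G σ) (hcompat : Compatible M G σ)
    (μ : Fin n → ℝ) (hmono : Monotone μ)
    (hchar : M.charpoly = ∏ i, (Polynomial.X - Polynomial.C (μ i)))
    (k : Fin n) (f : Fin n → ℝ) (heig : M.mulVec f = μ k • f)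
    (hmin : ∀ g : Fin n → ℝ, g ≠ 0 → M.mulVec g = μ k • g →
      {i | g i ≠ 0} ⊆ {i | f i ≠ 0} → {i | g i ≠ 0} = {i | f i ≠ 0}) :
    numStrong G σ f ≤ (k : ℕ) + 1 := by
  have : Fintype (strongDomains G σ f) := Fintype.ofFinite _
  rw [numStrong, Nat.card_eq_fintype_card]
  exact card_le_succ_of_minimal_support hM hmono hchar heig hmin
    (strongDomains_pairwise_disjoint hσ.1)
    (fun D => exists_mem_ne_zero_of_mem_strongDomains D.2)
    (fun x hx => ⟨⟨_, strongClass_mem_strongDomains hx⟩, mem_strongClass_self hx⟩)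
    (fun D D' h => indicator_dotProduct_mulVec_indicator_nonneg hσ.1 hcompat D.2 D'.2
      (Subtype.coe_ne_coe.mpr h))

/-- if f_k has minimal support then 𝔖(f_k) ≤ k
(1-based k; here k is 0-based). -/
theorem stmt_11 (n : ℕ) (M : Matrix (Fin n) (Fin n) ℝ) (hM : M.IsSymm)
    (G : SimpleGraph (Fin n)) (σ : Fin n → Fin n → ℝ)
    (hσ : IsSignature G σ) (hcompat : Compatible M G σ)
    (μ : Fin n → ℝ) (hmono : Monotone μ)
    (hchar : M.charpoly = ∏ i, (Polynomial.X - Polynomial.C (μ i)))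
    (k : Fin n) (f : Fin n → ℝ) (hf : f ≠ 0) (heig : M.mulVec f = μ k • f)
    (hmin : ∀ g : Fin n → ℝ, g ≠ 0 → M.mulVec g = μ k • g →
      {i | g i ≠ 0} ⊆ {i | f i ≠ 0} → {i | g i ≠ 0} = {i | f i ≠ 0}) :
    numStrong G σ f ≤ (k : ℕ) + 1 :=
  stmt_11_general n M hM G σ hσ hcompat μ hmono hchar k f heig hmin
end
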